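/- arXiv:1409.1614 — 4 statements merged into one kernel-verified Lean document; each statement's English description precedes it below -/
import Mathlib

section
/- Let S be a finite nonempty set of positive integers with |S| = n, let p ∈ [0,1], and let f be a random S-map such that the values f(i) for i ∈ S are chosen independently, P[f(i) ≠ 0] = p for every i ∈ S, and conditioned on f(i) ≠ 0 the value f(i) is uniformly distributed on S. Then the probability that f has a cycle is exactly p. -/
open MeasureTheory

/-- A cycle of a map `f` relative to a set `S`: a sequence `a 0, …, a (k-1)` of
elements of `S` with `f (a i) = a (i+1)` for `i < k - 1` and `f (a (k-1)) = a 0`. -/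
def HasCycle (S : Finset ℕ) (f : ℕ → ℕ) : Prop :=
  ∃ (k : ℕ) (a : ℕ → ℕ), 0 < k ∧ (∀ i < k, a i ∈ S) ∧
    (∀ i, i + 1 < k → f (a i) = a (i + 1)) ∧ f (a (k - 1)) = a 0

/-!
Give a value `c` the weight `w c = P[f(i) = c]` (`1 - p` for `c = 0`, `p / n` otherwise). By
independence, `f` has no cycle with probability equal to the total weight of the maps
`S → S ∪ {0}` all of whose orbits leave `S`, i.e. of the forests on `S` rooted at `0`.

Sorting the forests on `A` with roots in `B` by the set `Z` of vertices sent directly into `B`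
leaves, on `A \ Z`, a forest with roots in `Z`. This recursion gives the weighted Cayley formula:
these forests weigh `T * (T + R) ^ (#A - 1)`, where `T` and `R` are the total weights of `B`
and of `A`. For `A = S`, `B = {0}` we have `T = 1 - p` and `T + R = 1`, so `f` has no cycle
with probability `1 - p`.
-/

open Finset Function
open scoped Classical

section Maps

variable {α β : Type*} [Zero β]

noncomputable def mapsOn (A : Finset α) (C : Finset β) : Finset (α → β) :=
  (A.pi fun _ => C).image fun v i => if h : i ∈ A then v i h else 0

theorem mem_mapsOn {A : Finset α} {C : Finset β} {f : α → β} :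
    f ∈ mapsOn A C ↔ (∀ i ∈ A, f i ∈ C) ∧ ∀ i ∉ A, f i = 0 := by
  simp only [mapsOn, mem_image, mem_pi]
  constructor
  · rintro ⟨v, hv, rfl⟩
    exact ⟨fun i hi => by simpa [hi] using hv i hi, fun i hi => by simp [hi]⟩
  · rintro ⟨hC, h0⟩
    refine ⟨fun i _ => f i, hC, funext fun i => ?_⟩
    by_cases hi : i ∈ A <;> simp [hi, h0]

theorem sum_mapsOn_prod {R : Type*} [CommSemiring R] (A : Finset α) (C : Finset β)
    (w : β → R) : ∑ f ∈ mapsOn A C, ∏ i ∈ A, w (f i) = (∑ c ∈ C, w c) ^ #A := by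
  have hinj : Set.InjOn (fun (v : ∀ i ∈ A, β) i => if h : i ∈ A then v i h else 0)
      (A.pi fun _ => C) := fun v _ v' _ h =>
    funext fun i => funext fun hi => by simpa [hi] using congrFun h i
  rw [mapsOn, sum_image hinj, ← prod_const, prod_sum]
  refine sum_congr rfl fun v _ => ?_
  rw [← prod_attach]
  refine prod_congr rfl fun i _ => ?_
  simp [i.2]

theorem sum_mapsOn_union [DecidableEq α] [DecidableEq β] {R : Type*} [AddCommMonoid R]
    (A : Finset α) {C D : Finset β} (hCD : Disjoint C D) (G : (α → β) → R) :
    ∑ f ∈ mapsOn A (C ∪ D), G f =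
      ∑ Z ∈ A.powerset, ∑ gh ∈ mapsOn Z D ×ˢ mapsOn (A \ Z) C, G (Z.piecewise gh.1 gh.2) := by
  rw [← sum_fiberwise_of_maps_to (g := fun f => {i ∈ A | f i ∈ D}) fun f _ =>
    mem_powerset.2 (filter_subset _ _)]
  refine sum_congr rfl fun Z hZ => ?_
  have hZA := mem_powerset.1 hZ
  have hsplit (f : α → β) : Z.piecewise (Z.piecewise f 0) (Z.piecewise 0 f) = f := by
    funext i
    by_cases hi : i ∈ Z <;> simp [hi]
  refine sum_nbij' (fun f => (Z.piecewise f 0, Z.piecewise 0 f))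
    (fun gh => Z.piecewise gh.1 gh.2) ?_ ?_ (fun f _ => hsplit f) ?_ (fun f _ => by rw [hsplit])
  · intro f hf
    simp only [mem_filter, mem_mapsOn, mem_union] at hf
    obtain ⟨⟨hfA, hf0⟩, rfl⟩ := hf
    simp only [mem_product, mem_mapsOn, mem_sdiff, mem_filter, piecewise, Pi.zero_apply]
    grind
  · rintro ⟨g, h⟩ hgh
    simp only [mem_product, mem_mapsOn, mem_sdiff] at hgh
    simp only [mem_filter, mem_mapsOn, mem_union, piecewise]
    have := disjoint_left.1 hCD
    grind
  · rintro ⟨g, h⟩ hgh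
    simp only [mem_product, mem_mapsOn] at hgh
    ext i
    · by_cases hi : i ∈ Z <;> simp [hi, hgh.1.2]
    · by_cases hi : i ∈ Z <;> simp [hi, hgh.2.2 i]

end Maps

section Escapes

variable {α : Type*}

def Escapes (A : Finset α) (f : α → α) : Prop := ∀ x ∈ A, ∃ j, f^[j] x ∉ A

theorem iterate_eq_of_forall_iterate_mem {A : Finset α} {f g : α → α} (h : Set.EqOn f g A)
    {x : α} (hx : ∀ j, g^[j] x ∈ A) (j : ℕ) : f^[j] x = g^[j] x := by
  induction j with
  | zero => rfl
  | succ j ih => rw [iterate_succ_apply', iterate_succ_apply', ih, h (hx j)]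

theorem escapes_congr {A : Finset α} {f g : α → α} (h : Set.EqOn f g A) :
    Escapes A f ↔ Escapes A g := by
  suffices ∀ {f g : α → α}, Set.EqOn f g A → Escapes A f → Escapes A g from
    ⟨this h, this h.symm⟩
  intro f g h hf x hx
  by_contra! hg
  obtain ⟨j, hj⟩ := hf x hx
  exact hj (iterate_eq_of_forall_iterate_mem h hg j ▸ hg j)

theorem escapes_sdiff_iff [DecidableEq α] {A Z : Finset α} {f : α → α}
    (hZ : ∀ i ∈ Z, f i ∉ A) : Escapes (A \ Z) f ↔ Escapes A f := by
  constructor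
  · intro h x hx
    by_cases hxZ : x ∈ Z
    · exact ⟨1, hZ x hxZ⟩
    obtain ⟨j, hj⟩ := h x (mem_sdiff.2 ⟨hx, hxZ⟩)
    by_cases hjA : f^[j] x ∈ A
    · have hjZ : f^[j] x ∈ Z := by simpa [hjA] using hj
      exact ⟨j + 1, by rw [iterate_succ_apply']; exact hZ _ hjZ⟩
    · exact ⟨j, hjA⟩
  · intro h x hx
    obtain ⟨j, hj⟩ := h x (mem_sdiff.1 hx).1
    exact ⟨j, fun hj' => hj (mem_sdiff.1 hj').1⟩

theorem not_escapes_of_mapsTo {A : Finset α} {f : α → α} (hA : A.Nonempty)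
    (hf : Set.MapsTo f A A) : ¬Escapes A f := fun h => by
  obtain ⟨x, hx⟩ := hA
  obtain ⟨j, hj⟩ := h x hx
  exact hj (hf.iterate j hx)

theorem escapes_piecewise_iff [DecidableEq α] {A B Z : Finset α} (hAB : Disjoint A B)
    {g h : α → α} (hg : ∀ i ∈ Z, g i ∈ B) : Escapes A (Z.piecewise g h) ↔ Escapes (A \ Z) h := by
  rw [← escapes_sdiff_iff (Z := Z) fun i hi => by
    simpa [hi] using disjoint_right.1 hAB (hg i hi)]
  exact escapes_congr fun i hi => piecewise_eq_of_notMem _ _ _ (mem_sdiff.1 hi).2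

end Escapes

theorem sum_powersetCard_succ_sum {ι M : Type*} [AddCommMonoid M] (s : Finset ι) (f : ι → M)
    (k : ℕ) : ∑ t ∈ s.powersetCard (k + 1), ∑ i ∈ t, f i = (#s - 1).choose k • ∑ i ∈ s, f i := by
  classical
  rw [sum_comm' (t' := s) (s' := fun i => {t ∈ s.powersetCard (k + 1) | {i} ⊆ t}), smul_sum]
  · refine sum_congr rfl fun i hi => ?_
    rw [sum_const, card_filter_powersetCard_subset _ _ _ (singleton_subset_iff.2 hi) (by simp),
      card_singleton, Nat.add_sub_cancel]
  · intro t i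
    simp only [mem_powersetCard, mem_filter, singleton_subset_iff]
    exact ⟨fun ⟨⟨hts, hk⟩, hi⟩ => ⟨⟨⟨hts, hk⟩, hi⟩, hts hi⟩, fun ⟨h, _⟩ => ⟨h.1, h.2⟩⟩

section ForestPoly

variable {α R : Type*} [DecidableEq α] [CommSemiring R]

noncomputable def forestPoly (w : α → R) (A B : Finset α) : R :=
  if A = ∅ then 1 else (∑ b ∈ B, w b) * (∑ b ∈ B, w b + ∑ i ∈ A, w i) ^ (#A - 1)

theorem forestPoly_sdiff {w : α → R} {A Z : Finset α} (hZA : Z ⊆ A) :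
    forestPoly w (A \ Z) Z =
      if Z = A then 1 else (∑ i ∈ Z, w i) * (∑ i ∈ A, w i) ^ (#A - #Z - 1) := by
  have hempty : A \ Z = ∅ ↔ Z = A := by
    rw [sdiff_eq_empty_iff_subset]
    exact ⟨fun h => hZA.antisymm h, fun h => h.ge⟩
  rw [forestPoly, add_comm, sum_sdiff hZA, card_sdiff_of_subset hZA]
  simp only [hempty]

theorem sum_powersetCard_mul_forestPoly_sdiff (w : α → R) {A : Finset α} (B : Finset α) {m : ℕ}
    (hm : #A = m + 1) {j : ℕ} (hj : j ≤ m) :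
    ∑ Z ∈ A.powersetCard (j + 1), (∑ b ∈ B, w b) ^ #Z * forestPoly w (A \ Z) Z =
      (∑ b ∈ B, w b) ^ (j + 1) * (∑ i ∈ A, w i) ^ (m - j) * m.choose j := by
  rcases hj.lt_or_eq with hjm | rfl
  · obtain ⟨d, rfl⟩ := Nat.exists_eq_add_of_lt hjm
    have hZ : ∀ Z ∈ A.powersetCard (j + 1), (∑ b ∈ B, w b) ^ #Z * forestPoly w (A \ Z) Z =
        (∑ b ∈ B, w b) ^ (j + 1) * (∑ i ∈ A, w i) ^ d * ∑ i ∈ Z, w i := by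
      intro Z hZ
      obtain ⟨hZA, hZcard⟩ := mem_powersetCard.1 hZ
      have hZne : Z ≠ A := fun h => by rw [h, hm] at hZcard; omega
      rw [forestPoly_sdiff hZA, if_neg hZne, hZcard, hm,
        show j + d + 1 + 1 - (j + 1) - 1 = d by omega]
      ring
    rw [sum_congr rfl hZ, ← mul_sum, sum_powersetCard_succ_sum, hm, Nat.add_sub_cancel,
      nsmul_eq_mul, show j + d + 1 - j = d + 1 by omega]
    ring
  · rw [← hm, powersetCard_self, sum_singleton, forestPoly_sdiff subset_rfl, if_pos rfl, hm,
      Nat.sub_self, Nat.choose_self]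
    simp

theorem forestPoly_eq_sum_powerset (w : α → R) {A : Finset α} (B : Finset α)
    (hA : A.Nonempty) :
    forestPoly w A B =
      ∑ Z ∈ A.powerset with Z.Nonempty, (∑ b ∈ B, w b) ^ #Z * forestPoly w (A \ Z) Z := by
  obtain ⟨m, hm⟩ : ∃ m, #A = m + 1 := Nat.exists_eq_add_one.2 hA.card_pos
  rw [forestPoly, if_neg hA.ne_empty, hm, Nat.add_sub_cancel, add_pow, mul_sum, sum_filter,
    sum_powerset, hm, sum_range_succ' _ (m + 1), powersetCard_zero, sum_singleton,
    if_neg Finset.not_nonempty_empty, add_zero]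
  refine sum_congr rfl fun j hj => ?_
  rw [sum_congr rfl fun Z hZ => if_pos (card_pos.1 ((mem_powersetCard.1 hZ).2 ▸ j.succ_pos)),
    sum_powersetCard_mul_forestPoly_sdiff w B hm (Nat.lt_succ_iff.1 (mem_range.1 hj))]
  ring

end ForestPoly

section ForestWeight

variable {α R : Type*} [DecidableEq α] [Zero α] [CommSemiring R]

noncomputable def forestWeight (w : α → R) (A B : Finset α) : R :=
  ∑ f ∈ mapsOn A (A ∪ B) with Escapes A f, ∏ i ∈ A, w (f i)

theorem forestWeight_empty (w : α → R) (B : Finset α) : forestWeight w ∅ B = 1 := by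
  rw [forestWeight, filter_true_of_mem fun f _ x hx => absurd hx (notMem_empty x),
    sum_mapsOn_prod, card_empty, pow_zero]

theorem forestWeight_eq_sum_powerset (w : α → R) {A B : Finset α} (hAB : Disjoint A B)
    (hA : A.Nonempty) :
    forestWeight w A B =
      ∑ Z ∈ A.powerset with Z.Nonempty, (∑ b ∈ B, w b) ^ #Z * forestWeight w (A \ Z) Z := by
  rw [forestWeight, sum_filter, sum_mapsOn_union A hAB, sum_filter]
  refine sum_congr rfl fun Z hZ => ?_
  have hZA := mem_powerset.1 hZ
  split_ifs with hZne
  · have hterm : ∀ gh ∈ mapsOn Z B ×ˢ mapsOn (A \ Z) A,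
        (if Escapes A (Z.piecewise gh.1 gh.2) then ∏ i ∈ A, w (Z.piecewise gh.1 gh.2 i) else 0)
          = (∏ i ∈ Z, w (gh.1 i)) *
            if Escapes (A \ Z) gh.2 then ∏ i ∈ A \ Z, w (gh.2 i) else 0 := by
      rintro ⟨g, h⟩ hgh
      have hgB := (mem_mapsOn.1 (mem_product.1 hgh).1).1
      rw [escapes_piecewise_iff hAB hgB, mul_ite, mul_zero, ← prod_sdiff hZA, mul_comm]
      congr 2
      · exact prod_congr rfl fun i hi => by rw [piecewise_eq_of_mem _ _ _ hi]
      · exact prod_congr rfl fun i hi => by rw [piecewise_eq_of_notMem _ _ _ (mem_sdiff.1 hi).2]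
    rw [sum_congr rfl hterm, sum_product]
    simp_rw [← mul_sum]
    rw [← sum_mul, sum_mapsOn_prod, forestWeight, sum_filter, sdiff_union_of_subset hZA]
  · obtain rfl := not_nonempty_iff_eq_empty.1 hZne
    refine sum_eq_zero fun gh hgh => if_neg (not_escapes_of_mapsTo hA fun i hi => ?_)
    rw [piecewise_empty]
    exact (mem_mapsOn.1 (mem_product.1 hgh).2).1 i (by simpa using hi)

theorem forestWeight_eq_forestPoly (w : α → R) {A B : Finset α} (hAB : Disjoint A B) :
    forestWeight w A B = forestPoly w A B := by
  induction A using Finset.strongInduction generalizing B with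
  | H A ih =>
    rcases A.eq_empty_or_nonempty with rfl | hA
    · rw [forestWeight_empty, forestPoly, if_pos rfl]
    rw [forestWeight_eq_sum_powerset w hAB hA, forestPoly_eq_sum_powerset w B hA]
    refine sum_congr rfl fun Z hZ => ?_
    obtain ⟨hZA, hZne⟩ := mem_filter.1 hZ
    rw [ih (A \ Z) (sdiff_ssubset (mem_powerset.1 hZA) hZne) sdiff_disjoint]

end ForestWeight

theorem hasCycle_iff_not_escapes (S : Finset ℕ) (f : ℕ → ℕ) : HasCycle S f ↔ ¬Escapes S f := by
  simp only [Escapes, not_forall, not_exists, not_not, exists_prop]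
  constructor
  · rintro ⟨k, a, hk, haS, hstep, hlast⟩
    have hiter : ∀ i < k, f^[i] (a 0) = a i := by
      intro i hi
      induction i with
      | zero => rfl
      | succ i ih => rw [iterate_succ_apply', ih (by omega), hstep i hi]
    have hper : IsPeriodicPt f k (a 0) := by
      rw [IsPeriodicPt, IsFixedPt, ← Nat.sub_add_cancel hk, iterate_succ_apply',
        hiter _ (by omega), hlast]
    refine ⟨a 0, haS 0 hk, fun j => ?_⟩
    rw [← hper.iterate_mod_apply, hiter _ (Nat.mod_lt _ hk)]
    exact haS _ (Nat.mod_lt _ hk)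
  · rintro ⟨x, -, hx⟩
    obtain ⟨m, n, hmn, hmn_eq⟩ := S.finite_toSet.exists_lt_map_eq_of_forall_mem hx
    refine ⟨n - m, fun i => f^[i + m] x, by omega, fun i _ => hx _, fun i _ => ?_, ?_⟩
    · rw [← iterate_succ_apply' f, Nat.succ_eq_add_one, Nat.add_right_comm]
    · rw [← iterate_succ_apply' f, show (n - m - 1 + m).succ = n by omega, ← hmn_eq]
      simp

theorem hasCycle_congr {S : Finset ℕ} {f g : ℕ → ℕ} (h : Set.EqOn f g S) :
    HasCycle S f ↔ HasCycle S g := by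
  rw [hasCycle_iff_not_escapes, hasCycle_iff_not_escapes, escapes_congr h]

section Independence

variable {Ω α β : Type*} [MeasurableSpace Ω] [MeasurableSpace β] [MeasurableSingletonClass β]
  {μ : Measure Ω} {S : Finset α} {X : Ω → α → β}

theorem ProbabilityTheory.iIndepFun.measureReal_forall_mem_eq
    (hindep : ProbabilityTheory.iIndepFun (fun (i : S) ω => X ω i) μ) (f : α → β) :
    μ.real {ω | ∀ i ∈ S, X ω i = f i} = ∏ i ∈ S, μ.real {ω | X ω i = f i} := by
  have hset : {ω | ∀ i ∈ S, X ω i = f i} =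
      ⋂ i ∈ (univ : Finset S), (fun ω => X ω i) ⁻¹' {f i} := by
    ext; simp
  rw [hset, measureReal_def,
    hindep.measure_inter_preimage_eq_mul _ fun i _ => measurableSet_singleton _,
    ENNReal.toReal_prod, ← prod_coe_sort S]
  rfl

theorem measureReal_setOf_eq_sum_mapsOn [Zero β] [IsFiniteMeasure μ] {C : Finset β}
    (hXC : ∀ ω, ∀ i ∈ S, X ω i ∈ C) (hmeas : ∀ i ∈ S, Measurable fun ω => X ω i)
    (hindep : ProbabilityTheory.iIndepFun (fun (i : S) ω => X ω i) μ) {w : β → ℝ}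
    (hw : ∀ i ∈ S, ∀ c ∈ C, μ.real {ω | X ω i = c} = w c) {P : (α → β) → Prop}
    (hP : ∀ f g, Set.EqOn f g S → (P f ↔ P g)) :
    μ.real {ω | P (X ω)} = ∑ f ∈ mapsOn S C with P f, ∏ i ∈ S, w (f i) := by
  have hunion : {ω | P (X ω)} =
      ⋃ f ∈ {f ∈ mapsOn S C | P f}, {ω | ∀ i ∈ S, X ω i = f i} := by
    ext ω
    simp only [Set.mem_ofPred_eq, Set.mem_iUnion, mem_filter, exists_prop]
    constructor
    · intro h
      have hEq : Set.EqOn (X ω) (S.piecewise (X ω) 0) S := fun i hi =>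
        (piecewise_eq_of_mem _ _ _ hi).symm
      refine ⟨S.piecewise (X ω) 0,
        ⟨mem_mapsOn.2 ⟨fun i hi => ?_, fun i hi => ?_⟩, (hP _ _ hEq).1 h⟩, hEq⟩
      · rw [piecewise_eq_of_mem _ _ _ hi]; exact hXC ω i hi
      · rw [piecewise_eq_of_notMem _ _ _ hi]; rfl
    · rintro ⟨f, ⟨-, hf⟩, hωf⟩
      exact (hP _ _ hωf).2 hf
  rw [hunion, measureReal_biUnion_finset]
  · refine sum_congr rfl fun f hf => ?_
    have hfC := (mem_mapsOn.1 (mem_filter.1 hf).1).1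
    rw [hindep.measureReal_forall_mem_eq]
    exact prod_congr rfl fun i hi => hw i hi _ (hfC i hi)
  · intro f hf g hg hfg
    refine Set.disjoint_left.2 fun ω hωf hωg => hfg (funext fun i => ?_)
    by_cases hi : i ∈ S
    · exact (hωf i hi).symm.trans (hωg i hi)
    · rw [(mem_mapsOn.1 (mem_filter.1 hf).1).2 i hi, (mem_mapsOn.1 (mem_filter.1 hg).1).2 i hi]
  · intro f _
    have hset : {ω | ∀ i ∈ S, X ω i = f i} = ⋂ i ∈ S, (fun ω => X ω i) ⁻¹' {f i} := by
      ext; simp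
    rw [hset]
    exact Finset.measurableSet_biInter S fun i hi => hmeas i hi (measurableSet_singleton _)

end Independence

theorem measureReal_hasCycle {Ω : Type*} [MeasurableSpace Ω] {μ : Measure Ω}
    [IsFiniteMeasure μ] {S : Finset ℕ} (hS : S.Nonempty) (h0S : 0 ∉ S) {F : Ω → ℕ → ℕ}
    (hF : ∀ ω, ∀ i ∈ S, F ω i ∈ S ∪ {0}) (hmeas : ∀ i ∈ S, Measurable fun ω => F ω i)
    (hindep : ProbabilityTheory.iIndepFun (fun (i : S) ω => F ω i) μ) {w : ℕ → ℝ}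
    (hw : ∀ i ∈ S, ∀ c ∈ S ∪ {0}, μ.real {ω | F ω i = c} = w c)
    (hmass : ∑ c ∈ S ∪ {0}, w c = 1) :
    μ.real {ω | HasCycle S (F ω)} = 1 - w 0 := by
  have hS0 : Disjoint S {0} := disjoint_singleton_right.2 h0S
  have hforest : forestWeight w S {0} = w 0 := by
    rw [forestWeight_eq_forestPoly w hS0, forestPoly, if_neg hS.ne_empty, sum_singleton, add_comm,
      ← sum_singleton w 0, ← sum_union hS0, hmass, one_pow, mul_one, sum_singleton]
  have htotal := sum_filter_add_sum_filter_not (mapsOn S (S ∪ {0})) (Escapes S)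
    fun f => ∏ i ∈ S, w (f i)
  rw [sum_mapsOn_prod, hmass, one_pow] at htotal
  rw [forestWeight] at hforest
  rw [measureReal_setOf_eq_sum_mapsOn hF hmeas hindep hw fun f g h => hasCycle_congr h,
    filter_congr fun f _ => hasCycle_iff_not_escapes S f]
  linarith

theorem cycle_prob_uniform_general
    (S : Finset ℕ) (hS : S.Nonempty) (hpos : ∀ i ∈ S, 0 < i)
    (n : ℕ) (hn : S.card = n)
    (p : ℝ)
    {Ω : Type*} [MeasurableSpace Ω] (μ : Measure Ω) [IsProbabilityMeasure μ]
    (F : Ω → ℕ → ℕ)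
    (hSmap : ∀ ω, ∀ i ∈ S, F ω i ∈ S ∨ F ω i = 0)
    (hmeas : ∀ i ∈ S, Measurable fun ω => F ω i)
    (hindep : ProbabilityTheory.iIndepFun
      (fun (i : {i // i ∈ S}) ω => F ω i.val) μ)
    (hne : ∀ i ∈ S, (μ {ω | F ω i ≠ 0}).toReal = p)
    (hunif : ∀ i ∈ S, ∀ j ∈ S, (μ {ω | F ω i = j}).toReal = p / n) :
    (μ {ω | HasCycle S (F ω)}).toReal = p := by
  let w : ℕ → ℝ := fun c => if c = 0 then 1 - p else p / n
  have h0S : 0 ∉ S := fun h => (hpos 0 h).ne rfl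
  have hlaw : ∀ i ∈ S, ∀ c ∈ S ∪ {0}, μ.real {ω | F ω i = c} = w c := by
    intro i hi c hc
    rcases mem_union.1 hc with hcS | hc0
    · rw [show w c = p / n from if_neg (hpos c hcS).ne']
      exact hunif i hi c hcS
    · have hcompl : {ω | F ω i = 0} = {ω | F ω i ≠ 0}ᶜ := by ext; simp
      rw [mem_singleton.1 hc0, show w 0 = 1 - p from if_pos rfl, hcompl,
        probReal_compl_eq_one_sub (s := {ω | F ω i ≠ 0})
          (hmeas i hi (measurableSet_singleton 0)).compl,
        measureReal_def, hne i hi]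
  have hmass : ∑ c ∈ S ∪ {0}, w c = 1 := by
    have hn0 : (n : ℝ) ≠ 0 := by rw [← hn]; exact_mod_cast hS.card_pos.ne'
    rw [sum_union (disjoint_singleton_right.2 h0S), sum_singleton,
      sum_congr rfl fun c hc => if_neg (hpos c hc).ne', sum_const, hn, nsmul_eq_mul]
    simp only [w, if_pos rfl]
    field_simp
    ring
  have hF : ∀ ω, ∀ i ∈ S, F ω i ∈ S ∪ {0} := fun ω i hi => by simpa [or_comm] using hSmap ω i hi
  rw [← measureReal_def, measureReal_hasCycle hS h0S hF hmeas hindep hlaw hmass]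
  simp [w]

/-- Let `S` be a finite nonempty set of positive integers with `|S| = n`, let
`p ∈ [0,1]`, and let `F` be a random `S`-map whose values `F ω i` for `i ∈ S` are
independent, with `P[F i ≠ 0] = p` and, conditionally on being nonzero, uniform on `S`
(i.e. `P[F i = j] = p / n` for each `j ∈ S`).  Then the probability that `F` has a
cycle is exactly `p`. -/
theorem cycle_prob_uniform
    (S : Finset ℕ) (hS : S.Nonempty) (hpos : ∀ i ∈ S, 0 < i)
    (n : ℕ) (hn : S.card = n)
    (p : ℝ) (hp0 : 0 ≤ p) (hp1 : p ≤ 1)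
    {Ω : Type*} [MeasurableSpace Ω] (μ : Measure Ω) [IsProbabilityMeasure μ]
    (F : Ω → ℕ → ℕ)
    (hSmap : ∀ ω, ∀ i ∈ S, F ω i ∈ S ∨ F ω i = 0)
    (hmeas : ∀ i ∈ S, Measurable fun ω => F ω i)
    (hindep : ProbabilityTheory.iIndepFun
      (fun (i : {i // i ∈ S}) ω => F ω i.val) μ)
    (hne : ∀ i ∈ S, (μ {ω | F ω i ≠ 0}).toReal = p)
    (hunif : ∀ i ∈ S, ∀ j ∈ S, (μ {ω | F ω i = j}).toReal = p / n) :
    (μ {ω | HasCycle S (F ω)}).toReal = p :=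
  cycle_prob_uniform_general S hS hpos n hn p μ F hSmap hmeas hindep hne hunif
end

section
/- (Cayley's Formula) For any positive integer n, the number of trees on n labeled vertices is exactly n^{n−2}. -/
/-!
A tree with a distinguished root `r` is the same thing as a parent map `p : V → V` with
`p r = r` under whose iteration every vertex reaches `r`; so if `T` is the number of trees,
there are `n * T` such maps with a root of their own. By Joyal's observation, the pairs of a
vertex `u` and a rooted parent map are exactly as many as all maps `V → V`: both split, over a
set `S ⊆ V`, into a forest whose roots are the points of `S` together with a permutation of `S`
(the periodic points of a map) or with a linear order of `S` (the path from `u` to the root).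
Since `S` has as many permutations as linear orders, `n ^ n = n * n * T`.
-/

open Function SimpleGraph
open scoped Classical

variable {V : Type*}

def IsRooted (p : V → V) (r : V) : Prop := p r = r ∧ ∀ v, ∃ k, p^[k] v = r

theorem mem_of_isPeriodicPt_of_iterate_mem {f : V → V} {S : Set V} (hS : Set.MapsTo f S S)
    {n j : ℕ} {v : V} (hn : 0 < n) (hv : IsPeriodicPt f n v) (hj : f^[j] v ∈ S) : v ∈ S := by
  obtain ⟨d, hd⟩ := Nat.exists_eq_add_of_le (Nat.le_mul_of_pos_left j hn)
  rw [← (hv.mul_const j).eq, hd, add_comm, iterate_add_apply]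
  exact hS.iterate d hj

namespace IsRooted

variable {p : V → V} {r : V}

theorem eq_of_isPeriodicPt (hp : IsRooted p r) {n : ℕ} {v : V} (hn : 0 < n)
    (hv : IsPeriodicPt p n v) : v = r := by
  obtain ⟨k, hk⟩ := hp.2 v
  exact mem_of_isPeriodicPt_of_iterate_mem (S := {r}) (fun _ h => h ▸ hp.1) hn hv hk

theorem apply_ne_self (hp : IsRooted p r) {v : V} (hv : v ≠ r) : p v ≠ v :=
  fun h => hv (hp.eq_of_isPeriodicPt one_pos h)

end IsRooted

def parentGraph (p : V → V) : SimpleGraph V := SimpleGraph.fromRel fun a b => p a = b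

theorem parentGraph_adj {p : V → V} {a b : V} :
    (parentGraph p).Adj a b ↔ a ≠ b ∧ (p a = b ∨ p b = a) :=
  fromRel_adj _ _ _

namespace IsRooted

variable {p : V → V} {r : V}

theorem parentGraph_adj_apply (hp : IsRooted p r) {v : V} (hv : v ≠ r) :
    (parentGraph p).Adj v (p v) :=
  parentGraph_adj.2 ⟨(hp.apply_ne_self hv).symm, Or.inl rfl⟩

theorem exists_isPath_snd_eq (hp : IsRooted p r) (v : V) :
    ∃ w : (parentGraph p).Walk v r, w.IsPath ∧ w.snd = p v := by
  suffices ∀ k v, p^[k] v = r → ∃ w : (parentGraph p).Walk v r,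
      w.IsPath ∧ w.snd = p v ∧ ∀ x ∈ w.support, ∃ j, p^[j] v = x by
    obtain ⟨k, hk⟩ := hp.2 v
    obtain ⟨w, hw, hsnd, -⟩ := this k v hk
    exact ⟨w, hw, hsnd⟩
  have atRoot : ∃ w : (parentGraph p).Walk r r,
      w.IsPath ∧ w.snd = p r ∧ ∀ x ∈ w.support, ∃ j, p^[j] r = x :=
    ⟨.nil, .nil, hp.1.symm, fun x hx => ⟨0, by simp_all⟩⟩
  intro k
  induction k with
  | zero => rintro v rfl; exact atRoot
  | succ k ih =>
    intro v hk
    rcases eq_or_ne v r with rfl | hv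
    · exact atRoot
    obtain ⟨w, hw, -, hsupp⟩ := ih (p v) hk
    -- `v` is not an iterate of `p v`, as it would then be periodic
    have hv' : v ∉ w.support := fun hmem => by
      obtain ⟨j, hj⟩ := hsupp v hmem
      refine hv (hp.eq_of_isPeriodicPt j.succ_pos ?_)
      rwa [IsPeriodicPt, IsFixedPt, iterate_succ_apply]
    refine ⟨.cons (hp.parentGraph_adj_apply hv) w, hw.cons hv', Walk.snd_cons _ _, ?_⟩
    intro x hx
    rw [Walk.support_cons, List.mem_cons] at hx
    rcases hx with rfl | hx
    · exact ⟨0, rfl⟩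
    · obtain ⟨j, rfl⟩ := hsupp x hx
      exact ⟨j + 1, iterate_succ_apply _ _ _⟩

theorem connected_parentGraph (hp : IsRooted p r) : (parentGraph p).Connected :=
  have : Nonempty V := ⟨r⟩
  ⟨fun u v => by
    obtain ⟨wu, -⟩ := hp.exists_isPath_snd_eq u
    obtain ⟨wv, -⟩ := hp.exists_isPath_snd_eq v
    exact wu.reachable.trans wv.reachable.symm⟩

theorem card_edgeSet_parentGraph [Finite V] (hp : IsRooted p r) :
    Nat.card (parentGraph p).edgeSet + 1 = Nat.card V := by
  let edge : {v // v ≠ r} → (parentGraph p).edgeSet :=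
    fun v => ⟨s(v, p v), hp.parentGraph_adj_apply v.2⟩
  have hedge : Bijective edge := by
    refine ⟨fun v w h => ?_, ?_⟩
    · rcases Sym2.eq_iff.1 (congrArg Subtype.val h) with ⟨h, -⟩ | ⟨hv, hw⟩
      · exact Subtype.ext h
      · -- otherwise `v ↦ w ↦ v` is a 2-cycle
        refine absurd (hp.eq_of_isPeriodicPt two_pos ?_) v.2
        change p (p v) = v
        rw [hw, hv]
    · rintro ⟨e, he⟩
      induction e using Sym2.ind with
      | _ a b =>
      obtain ⟨hab, h | h⟩ := parentGraph_adj.1 he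
      · refine ⟨⟨a, fun ha => hab ?_⟩, Subtype.ext (by simp [edge, h])⟩
        rw [← h, ha, hp.1]
      · refine ⟨⟨b, fun hb => hab ?_⟩, Subtype.ext (by simp [edge, h, Sym2.eq_swap])⟩
        rw [← h, hb, hp.1]
  have hcompl := Set.ncard_sdiff_singleton_add_one (Set.mem_univ r) (Set.toFinite _)
  rw [Set.ncard_univ, ← Set.compl_eq_univ_sdiff, ← Nat.card_coe_set_eq] at hcompl
  rw [← Nat.card_congr (Equiv.ofBijective edge hedge)]
  exact hcompl

theorem isTree_parentGraph [Finite V] (hp : IsRooted p r) : (parentGraph p).IsTree :=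
  isTree_iff_connected_and_card.2 ⟨hp.connected_parentGraph, hp.card_edgeSet_parentGraph⟩

end IsRooted

namespace SimpleGraph.IsTree

variable {G : SimpleGraph V}

noncomputable def parent (hG : G.IsTree) (r v : V) : V :=
  (hG.existsUnique_path v r).exists.choose.snd

theorem parent_eq_snd (hG : G.IsTree) {r v : V} {w : G.Walk v r} (hw : w.IsPath) :
    hG.parent r v = w.snd :=
  congrArg Walk.snd <|
    (hG.existsUnique_path v r).unique (hG.existsUnique_path v r).exists.choose_spec hw

theorem adj_parent (hG : G.IsTree) {r v : V} (h : hG.parent r v ≠ v) :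
    G.Adj v (hG.parent r v) := by
  obtain ⟨w, hw⟩ := (hG.existsUnique_path v r).exists
  rw [hG.parent_eq_snd hw] at h ⊢
  cases w with
  | nil => exact absurd rfl h
  | cons hadj q => simpa using hadj

theorem isRooted_parent (hG : G.IsTree) (r : V) : IsRooted (hG.parent r) r := by
  refine ⟨hG.parent_eq_snd (w := .nil) .nil, fun v => ?_⟩
  obtain ⟨w, hw⟩ := (hG.existsUnique_path v r).exists
  induction w with
  | nil => exact ⟨0, rfl⟩
  | cons h q ih =>
    obtain ⟨k, hk⟩ := ih hw.of_cons
    exact ⟨k + 1, by rwa [iterate_succ_apply, hG.parent_eq_snd hw, Walk.snd_cons]⟩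

theorem parentGraph_parent (hG : G.IsTree) (r : V) : parentGraph (hG.parent r) = G := by
  ext a b
  rw [parentGraph_adj]
  constructor
  · rintro ⟨hab, rfl | rfl⟩
    · exact hG.adj_parent (Ne.symm hab)
    · exact (hG.adj_parent hab).symm
  · intro hadj
    refine ⟨hadj.ne, ?_⟩
    obtain ⟨w, hw⟩ := (hG.existsUnique_path a r).exists
    -- the edge points from `a` to `b` iff `b` lies on the path from `a` to the root
    by_cases hb : b ∈ w.support
    · exact .inl ((hG.parent_eq_snd hw).trans (hG.isAcyclic.eq_snd_of_adj_start hw hadj hb).symm)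
    · exact .inr ((hG.parent_eq_snd (hw.cons hb (h := hadj.symm))).trans (Walk.snd_cons _ _))

end SimpleGraph.IsTree

theorem IsRooted.parent_parentGraph {p : V → V} {r : V} (hp : IsRooted p r)
    (hG : (parentGraph p).IsTree) : hG.parent r = p := by
  funext v
  obtain ⟨w, hw, hsnd⟩ := hp.exists_isPath_snd_eq v
  rw [hG.parent_eq_snd hw, hsnd]

noncomputable def rootedEquivTree [Finite V] (r : V) :
    {p : V → V // IsRooted p r} ≃ {G : SimpleGraph V // G.IsTree} where
  toFun p := ⟨parentGraph p, p.2.isTree_parentGraph⟩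
  invFun G := ⟨G.2.parent r, G.2.isRooted_parent r⟩
  left_inv p := Subtype.ext (p.2.parent_parentGraph p.2.isTree_parentGraph)
  right_inv G := Subtype.ext (G.2.parentGraph_parent r)

theorem Function.exists_iterate_mem_periodicPts [Finite V] (f : V → V) (v : V) :
    ∃ k, f^[k] v ∈ periodicPts f := by
  obtain ⟨i, j, hne, h⟩ := Finite.exists_ne_map_eq_of_infinite fun i : ℕ => f^[i] v
  wlog hij : i < j generalizing i j
  · exact this j i hne.symm h.symm (by omega)
  refine ⟨i, mk_mem_periodicPts (n := j - i) (by omega) ?_⟩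
  change f^[j - i] (f^[i] v) = f^[i] v
  rw [← iterate_add_apply, Nat.sub_add_cancel hij.le, h]

theorem exists_iterate_mem_of_eqOn_compl {f g : V → V} {S : Set V} (h : ∀ v ∉ S, f v = g v)
    {k : ℕ} {v : V} (hk : g^[k] v ∈ S) : ∃ j, f^[j] v ∈ S := by
  induction k generalizing v with
  | zero => exact ⟨0, hk⟩
  | succ k ih =>
    by_cases hv : v ∈ S
    · exact ⟨0, hv⟩
    obtain ⟨j, hj⟩ := ih (v := g v) hk
    exact ⟨j + 1, by rwa [iterate_succ_apply, h v hv]⟩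

def IsRootedForest (p : V → V) (S : Set V) : Prop :=
  (∀ v ∈ S, p v = v) ∧ ∀ v, ∃ k, p^[k] v ∈ S

theorem isRootedForest_piecewise {f : V → V} {S : Set V} (h : ∀ v, ∃ k, f^[k] v ∈ S) :
    IsRootedForest (S.piecewise id f) S :=
  ⟨fun _ hv => S.piecewise_eq_of_mem _ _ hv, fun v =>
    let ⟨_, hk⟩ := h v
    exists_iterate_mem_of_eqOn_compl (g := f) (fun _ hw => S.piecewise_eq_of_notMem _ _ hw) hk⟩

theorem IsRootedForest.nat_card_pos [Finite V] [Nonempty V] {g : V → V} {S : Set V}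
    (hg : IsRootedForest g S) : 0 < Nat.card S :=
  have ⟨_, hk⟩ := hg.2 (Classical.arbitrary V)
  have : Nonempty S := ⟨⟨_, hk⟩⟩
  Nat.card_pos

section Glue

variable {S : Set V}

noncomputable def glue (σ : S → S) (g : V → V) : V → V :=
  fun v => if hv : v ∈ S then σ ⟨v, hv⟩ else g v

theorem glue_val (σ : S → S) (g : V → V) (x : S) : glue σ g x = σ x := dif_pos x.2

theorem glue_of_notMem (σ : S → S) (g : V → V) {v : V} (hv : v ∉ S) : glue σ g v = g v :=
  dif_neg hv

theorem glue_eq {σ : S → S} {g f : V → V} (hσ : ∀ x, (σ x : V) = f x)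
    (hg : ∀ v ∉ S, g v = f v) : glue σ g = f := by
  funext v
  by_cases hv : v ∈ S
  · exact (glue_val σ g ⟨v, hv⟩).trans (hσ _)
  · exact (glue_of_notMem σ g hv).trans (hg v hv)

theorem piecewise_id_glue (σ : S → S) {g : V → V} (hg : ∀ v ∈ S, g v = v) :
    S.piecewise id (glue σ g) = g := by
  funext v
  by_cases hv : v ∈ S
  · rw [S.piecewise_eq_of_mem _ _ hv, hg v hv, id]
  · rw [S.piecewise_eq_of_notMem _ _ hv, glue_of_notMem σ g hv]

theorem periodicPts_glue [Finite V] (σ : Equiv.Perm S) {g : V → V} (hg : IsRootedForest g S) :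
    periodicPts (glue σ g) = S := by
  refine subset_antisymm (fun v hv => ?_) (fun v hv => ?_)
  · obtain ⟨n, hn, hvn⟩ := mem_periodicPts.1 hv
    obtain ⟨_, hk⟩ := hg.2 v
    obtain ⟨_, hj⟩ := exists_iterate_mem_of_eqOn_compl (fun _ hw => glue_of_notMem σ g hw) hk
    exact mem_of_isPeriodicPt_of_iterate_mem
      (fun w hw => by rw [← Subtype.coe_mk w hw, glue_val]; exact Subtype.prop _) hn hvn hj
  · have hsemi : Semiconj Subtype.val σ (glue σ g) := fun x => (glue_val σ g x).symm
    exact hsemi.mapsTo_periodicPts (σ.injective.mem_periodicPts ⟨v, hv⟩)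

end Glue

noncomputable def periodicPtsFiberEquiv [Finite V] (S : Set V) :
    {f : V → V // periodicPts f = S} ≃ Equiv.Perm S × {g : V → V // IsRootedForest g S} where
  toFun f :=
    ((f.2 ▸ bijOn_periodicPts f.1 :).equiv f.1,
      ⟨S.piecewise id f.1, isRootedForest_piecewise fun v => by
        simpa only [f.2] using exists_iterate_mem_periodicPts f.1 v⟩)
  invFun x := ⟨glue x.1 x.2.1, periodicPts_glue x.1 x.2.2⟩
  left_inv f := Subtype.ext (glue_eq (fun _ => rfl) fun _ hv => S.piecewise_eq_of_notMem _ _ hv)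
  right_inv x := Prod.ext (Equiv.ext fun y => Subtype.ext (glue_val _ _ y))
    (Subtype.ext (piecewise_id_glue _ x.2.2.1))

def forwardOrbit (p : V → V) (u : V) : Set V := Set.range fun i => p^[i] u

namespace IsRooted

variable {p : V → V} {r : V}

noncomputable def height (hp : IsRooted p r) (v : V) : ℕ := Nat.find (hp.2 v)

theorem iterate_height (hp : IsRooted p r) (v : V) : p^[hp.height v] v = r :=
  Nat.find_spec (hp.2 v)

theorem root_mem_forwardOrbit (hp : IsRooted p r) (u : V) : r ∈ forwardOrbit p u :=
  ⟨_, hp.iterate_height u⟩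

theorem iterate_min_height (hp : IsRooted p r) (v : V) (j : ℕ) :
    p^[min j (hp.height v)] v = p^[j] v := by
  rcases le_total j (hp.height v) with h | h
  · rw [min_eq_left h]
  · obtain ⟨d, rfl⟩ := Nat.exists_eq_add_of_le h
    rw [min_eq_right h, add_comm, iterate_add_apply, hp.iterate_height, iterate_fixed hp.1]

theorem iterate_injOn_height (hp : IsRooted p r) (v : V) {i j : ℕ} (hi : i ≤ hp.height v)
    (hj : j ≤ hp.height v) (h : p^[i] v = p^[j] v) : i = j := by
  -- an earlier repetition would make `p^[i] v` periodic, hence the root, before the height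
  have key : ∀ i j, i < j → j ≤ hp.height v → p^[i] v = p^[j] v → False := by
    intro i j hij hj h
    have hr : p^[i] v = r := hp.eq_of_isPeriodicPt (n := j - i) (by omega) <| by
      change p^[j - i] (p^[i] v) = p^[i] v
      rw [← iterate_add_apply, Nat.sub_add_cancel hij.le, h]
    have := Nat.find_min' (hp.2 v) hr
    unfold height at hj
    omega
  rcases lt_trichotomy i j with hij | rfl | hij
  · exact (key i j hij hj h).elim
  · rfl
  · exact (key j i hij hi h.symm).elim

noncomputable def orbitEquiv (hp : IsRooted p r) (u : V) :
    Fin (hp.height u + 1) ≃ forwardOrbit p u :=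
  Equiv.ofBijective (fun i => ⟨p^[i] u, i, rfl⟩)
    ⟨fun i j h => Fin.ext <| hp.iterate_injOn_height u (Nat.lt_succ_iff.1 i.2)
        (Nat.lt_succ_iff.1 j.2) (congrArg Subtype.val h),
      fun ⟨_, j, hj⟩ => ⟨⟨min j (hp.height u), by omega⟩,
        Subtype.ext ((hp.iterate_min_height u j).trans hj)⟩⟩

theorem nat_card_forwardOrbit (hp : IsRooted p r) (u : V) :
    Nat.card (forwardOrbit p u) = hp.height u + 1 := by
  rw [← Nat.card_congr (hp.orbitEquiv u), Nat.card_fin]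

noncomputable def orbitEquivOfEq (hp : IsRooted p r) {u : V} {S : Set V}
    (hS : forwardOrbit p u = S) : Fin (Nat.card S) ≃ S :=
  (finCongr (by rw [← hS, hp.nat_card_forwardOrbit])).trans
    ((hp.orbitEquiv u).trans (Equiv.setCongr hS))

theorem orbitEquivOfEq_apply (hp : IsRooted p r) {u : V} {S : Set V}
    (hS : forwardOrbit p u = S) (i : Fin (Nat.card S)) :
    (hp.orbitEquivOfEq hS i : V) = p^[i] u :=
  rfl

end IsRooted

section NextAlong

variable {S : Set V} {k : ℕ}

noncomputable def nextAlong (e : Fin k ≃ S) (x : S) : S :=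
  e ⟨min (e.symm x + 1) (k - 1), by have := (e.symm x).2; omega⟩

theorem nextAlong_apply (e : Fin k ≃ S) (i : Fin k) :
    nextAlong e (e i) = e ⟨min (i + 1) (k - 1), by omega⟩ := by
  simp only [nextAlong, Equiv.symm_apply_apply]

theorem iterate_glue_nextAlong (e : Fin k ≃ S) (g : V → V) {i : ℕ} (hi : i < k) (m : ℕ) :
    (glue (nextAlong e) g)^[m] (e ⟨i, hi⟩) = e ⟨min (i + m) (k - 1), by omega⟩ := by
  induction m with
  | zero => simp only [iterate_zero, id, add_zero, min_eq_left (Nat.le_sub_one_of_lt hi)]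
  | succ m ih =>
    rw [iterate_succ_apply', ih, glue_val, nextAlong_apply]
    congr 3
    simp only
    omega

theorem isRooted_glue_nextAlong (e : Fin k ≃ S) (hk : 0 < k) {g : V → V}
    (hg : IsRootedForest g S) : IsRooted (glue (nextAlong e) g) (e ⟨k - 1, by omega⟩) := by
  refine ⟨?_, fun v => ?_⟩
  · simpa using iterate_glue_nextAlong e g (i := k - 1) (by omega) 1
  · obtain ⟨_, hm⟩ := hg.2 v
    obtain ⟨j, hj⟩ := exists_iterate_mem_of_eqOn_compl (f := glue (nextAlong e) g)
      (fun _ hw => glue_of_notMem _ g hw) hm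
    have hv : (glue (nextAlong e) g)^[j] v = e (e.symm ⟨_, hj⟩) := by rw [e.apply_symm_apply]
    refine ⟨k - 1 + j, ?_⟩
    rw [iterate_add_apply, hv, iterate_glue_nextAlong]
    congr 3
    omega

theorem forwardOrbit_glue_nextAlong (e : Fin k ≃ S) (hk : 0 < k) (g : V → V) :
    forwardOrbit (glue (nextAlong e) g) (e ⟨0, hk⟩) = S := by
  ext v
  constructor
  · rintro ⟨m, rfl⟩
    dsimp only
    rw [iterate_glue_nextAlong]
    exact Subtype.prop _
  · intro hv
    refine ⟨e.symm ⟨v, hv⟩, ?_⟩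
    dsimp only
    rw [iterate_glue_nextAlong]
    conv_rhs => rw [← Subtype.coe_mk v hv, ← e.apply_symm_apply ⟨v, hv⟩]
    have := (e.symm ⟨v, hv⟩).isLt
    congr 3
    simp only [Equiv.invFun_as_coe]
    omega

end NextAlong

noncomputable def forwardOrbitFiberEquiv [Finite V] [Nonempty V] (S : Set V) :
    {x : V × {q : V × (V → V) // IsRooted q.2 q.1} // forwardOrbit x.2.1.2 x.1 = S} ≃
      (Fin (Nat.card S) ≃ S) × {g : V → V // IsRootedForest g S} where
  toFun x := (x.1.2.2.orbitEquivOfEq x.2,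
    ⟨S.piecewise id x.1.2.1.2, isRootedForest_piecewise fun v =>
      let ⟨k, hk⟩ := x.1.2.2.2 v
      ⟨k, x.2.subset (hk ▸ x.1.2.2.root_mem_forwardOrbit x.1.1)⟩⟩)
  invFun y :=
    have hk := y.2.2.nat_card_pos
    ⟨(y.1 ⟨0, hk⟩, ⟨(y.1 ⟨_, Nat.sub_one_lt hk.ne'⟩, glue (nextAlong y.1) y.2.1),
      isRooted_glue_nextAlong y.1 hk y.2.2⟩), forwardOrbit_glue_nextAlong y.1 hk _⟩
  left_inv := by
    rintro ⟨⟨u, ⟨⟨r, p⟩, hp⟩⟩, rfl⟩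
    have hcard := hp.nat_card_forwardOrbit u
    refine Subtype.ext (Prod.ext rfl (Subtype.ext (Prod.ext ?_ ?_)))
    · show p^[Nat.card (forwardOrbit p u) - 1] u = r
      rw [hcard, Nat.add_sub_cancel, hp.iterate_height]
    · refine glue_eq (fun x => ?_) fun v hv => Set.piecewise_eq_of_notMem _ _ _ hv
      obtain ⟨⟨i, -⟩, rfl⟩ := (hp.orbitEquivOfEq rfl).surjective x
      rw [nextAlong_apply]
      show p^[min (i + 1) (Nat.card (forwardOrbit p u) - 1)] u = p (p^[i] u)
      rw [hcard, Nat.add_sub_cancel, hp.iterate_min_height, iterate_succ_apply']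
  right_inv := by
    rintro ⟨e, g, hg⟩
    refine Prod.ext (Equiv.ext fun i => Subtype.ext ?_) (Subtype.ext (piecewise_id_glue _ hg.1))
    rw [IsRooted.orbitEquivOfEq_apply, iterate_glue_nextAlong]
    congr 2
    ext
    simp only
    omega

noncomputable def joyalEquiv [Finite V] [Nonempty V] :
    (V → V) ≃ V × {q : V × (V → V) // IsRooted q.2 q.1} :=
  (Equiv.sigmaFiberEquiv fun f : V → V => periodicPts f).symm.trans <|
    (Equiv.sigmaCongrRight fun S => (periodicPtsFiberEquiv S).trans <|
      -- a fixed enumeration of `S` turns its permutations into its linear orders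
      (((Finite.equivFin S).equivCongr (Equiv.refl S)).prodCongr (Equiv.refl _)).trans
        (forwardOrbitFiberEquiv S).symm).trans
    (Equiv.sigmaFiberEquiv fun x : V × {q : V × (V → V) // IsRooted q.2 q.1} =>
      forwardOrbit x.2.1.2 x.1)

theorem nat_card_isRooted [Finite V] :
    Nat.card {q : V × (V → V) // IsRooted q.2 q.1} =
      Nat.card V * Nat.card {G : SimpleGraph V // G.IsTree} := by
  have := Fintype.ofFinite V
  rw [Nat.card_congr (Equiv.subtypeProdEquivSigmaSubtype fun r p => IsRooted p r), Nat.card_sigma]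
  simp only [Nat.card_congr (rootedEquivTree _), Finset.sum_const, Finset.card_univ, smul_eq_mul,
    Nat.card_eq_fintype_card]

theorem nat_card_isTree_mul_sq [Finite V] [Nonempty V] :
    Nat.card {G : SimpleGraph V // G.IsTree} * Nat.card V ^ 2 = Nat.card V ^ Nat.card V := by
  rw [← Nat.card_fun, Nat.card_congr joyalEquiv, Nat.card_prod, nat_card_isRooted]
  ring

/-- **Cayley's formula.** For any positive integer `n`, the number of trees on `n`
labeled vertices (connected acyclic simple graphs on the vertex set `Fin n`) is
exactly `n ^ (n - 2)`. -/
theorem cayley_formula (n : ℕ) (hn : 0 < n) :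
    {G : SimpleGraph (Fin n) | G.IsTree}.ncard = n ^ (n - 2) := by
  have : Nonempty (Fin n) := ⟨⟨0, hn⟩⟩
  have h := nat_card_isTree_mul_sq (V := Fin n)
  rw [Nat.card_fin] at h
  rw [← Nat.card_coe_set_eq]
  refine Nat.eq_of_mul_eq_mul_right (pow_pos hn 2) (h.trans ?_)
  obtain rfl | h2 : n = 1 ∨ 2 ≤ n := by omega
  · rfl
  · exact (pow_sub_mul_pow n h2).symm
end

section
/- Let S be a finite nonempty set of positive integers with |S| = n and let G ⊆ S with |G| = k. The number of S-maps f such that f(i) ∈ S for all i ∈ G, f(i) = 0 for all i ∈ S \ G, and f is cycle-free, equals (n−k)·n^{k−1} when k ≥ 1, and equals 1 when k = 0. Equivalently, a random S-map f with f(i) = 0 for i ∉ G and f(i) uniform and independent on S for i ∈ G has a cycle with probability k/n. -/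
open MeasureTheory

/-!
Points of `S \ G` are sent to the fixed point `0`, so an admissible map `f` has a cycle iff
some point of `G` is periodic, and `f` permutes its set `T ⊆ G` of periodic points. Cutting `f`
along `T` identifies the maps with periodic set `T` with pairs (permutation of `T`, cycle-free
map on `G \ T`), so the number `N(k)` of cycle-free maps satisfies
`n ^ k = ∑_{T ⊆ G} |T|! * N(k - |T|)`. This recursion determines `N`, and
`(n - k) * n ^ (k - 1)` satisfies it.

Each of the `n ^ k` admissible maps is the value of `F` with probability `n ^ (-k)`, so these
values carry all the mass and `P(cycle) = (n ^ k - N(k)) * n ^ (-k) = k / n`.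
-/

open Finset Function
open scoped Nat

section Dynamics

variable {α : Type*} {f g : α → α} {x : α} {A : Set α}

theorem Function.mem_of_iterate_mem_of_mapsTo (hA : Set.MapsTo f A A) (hx : x ∈ periodicPts f)
    {n : ℕ} (hn : f^[n] x ∈ A) : x ∈ A := by
  obtain ⟨m, hm, hper⟩ := hx
  have hret : f^[m * n - n] (f^[n] x) = x := by
    rw [← iterate_add_apply, Nat.sub_add_cancel (Nat.le_mul_of_pos_left n hm)]
    exact (hper.mul_const n).eq
  exact hret ▸ hA.iterate _ hn

theorem Function.iterate_apply_eq_of_eqOn (hfg : Set.EqOn f g A) (horb : ∀ n, g^[n] x ∈ A)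
    (n : ℕ) : f^[n] x = g^[n] x := by
  induction n with
  | zero => rfl
  | succ n ih => rw [iterate_succ_apply', iterate_succ_apply', ih, hfg (horb n)]

theorem Function.mem_periodicPts_of_eqOn (hfg : Set.EqOn f g A) (horb : ∀ n, g^[n] x ∈ A)
    (hx : x ∈ periodicPts g) : x ∈ periodicPts f := by
  obtain ⟨m, hm, hper⟩ := hx
  exact mk_mem_periodicPts hm ((iterate_apply_eq_of_eqOn hfg horb m).trans hper)

/-- Once an orbit leaves `A` it is stuck at `z`, so a periodic orbit starting in `A` never
leaves it. -/
theorem Function.iterate_mem_of_mem_periodicPts {z : α} (hout : ∀ y ∉ A, f y = z)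
    (hz : z ∉ A) (hxA : x ∈ A) (hx : x ∈ periodicPts f) (n : ℕ) : f^[n] x ∈ A := by
  by_contra hn
  have hsink : Set.MapsTo f {z} {z} := fun y hy => by
    rw [Set.mem_singleton_iff.1 hy]
    exact hout z hz
  have hxz : f^[n + 1] x ∈ ({z} : Set α) := by
    rw [iterate_succ_apply']
    exact hout _ hn
  exact hz (mem_of_iterate_mem_of_mapsTo hsink hx hxz ▸ hxA)

end Dynamics

theorem hasCycle_iff_exists_mem_periodicPts {S : Finset ℕ} {f : ℕ → ℕ} :
    HasCycle S f ↔ ∃ x ∈ periodicPts f, ∀ n, f^[n] x ∈ S := by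
  constructor
  · rintro ⟨k, a, hk, haS, hstep, hlast⟩
    have hiter : ∀ i < k, f^[i] (a 0) = a i := by
      intro i hi
      induction i with
      | zero => rfl
      | succ i ih => rw [iterate_succ_apply', ih (by omega), hstep i hi]
    have hper : IsPeriodicPt f k (a 0) := by
      change f^[k] (a 0) = a 0
      rw [← Nat.sub_add_cancel hk, iterate_succ_apply', hiter _ (by omega), hlast]
    refine ⟨a 0, mk_mem_periodicPts hk hper, fun n => ?_⟩
    rw [← hper.iterate_mod_apply, hiter _ (Nat.mod_lt _ hk)]
    exact haS _ (Nat.mod_lt _ hk)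
  · rintro ⟨x, ⟨m, hm, hper⟩, horb⟩
    refine ⟨m, fun i => f^[i] x, hm, fun i _ => horb i,
      fun i _ => (iterate_succ_apply' f i x).symm, ?_⟩
    calc f (f^[m - 1] x) = f^[m - 1 + 1] x := (iterate_succ_apply' f _ x).symm
      _ = x := by rw [Nat.sub_add_cancel hm]; exact hper

/-- The generalized Cayley formula: `(n - k) * n ^ (k - 1)` rooted forests on an `n`-set have a
prescribed set of `n - k` roots. -/
def cycleFreeCount (n k : ℕ) : ℕ := if k = 0 then 1 else (n - k) * n ^ (k - 1)

theorem cycleFreeCount_add_mul_pow {n k : ℕ} (hk : k ≤ n) :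
    cycleFreeCount n k + k * n ^ (k - 1) = n ^ k := by
  unfold cycleFreeCount
  split_ifs with h
  · simp [h]
  · rw [← add_mul, Nat.sub_add_cancel hk, ← pow_succ',
      Nat.sub_add_cancel (Nat.one_le_iff_ne_zero.2 h)]

theorem sum_descFactorial_mul_cycleFreeCount {n k : ℕ} (hk : k ≤ n) :
    ∑ j ∈ range (k + 1), k.descFactorial j * cycleFreeCount n (k - j) = n ^ k := by
  induction k with
  | zero => simp [cycleFreeCount]
  | succ k ih =>
    simp only [sum_range_succ', Nat.succ_descFactorial_succ, Nat.add_sub_add_right, mul_assoc,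
      ← mul_sum, ih (by omega), Nat.descFactorial_zero, one_mul, Nat.sub_zero]
    rw [← cycleFreeCount_add_mul_pow hk, Nat.add_sub_cancel, add_comm]

theorem sum_powerset_factorial_mul_cycleFreeCount {α : Type*} {n : ℕ} {G : Finset α}
    (hG : #G ≤ n) : ∑ T ∈ G.powerset, (#T)! * cycleFreeCount n (#G - #T) = n ^ #G := by
  rw [sum_powerset_apply_card (fun j => j ! * cycleFreeCount n (#G - j)),
    ← sum_descFactorial_mul_cycleFreeCount hG]
  refine sum_congr rfl fun j _ => ?_
  rw [smul_eq_mul, Nat.descFactorial_eq_factorial_mul_choose, ← mul_assoc,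
    mul_comm (Nat.choose _ _)]

section SMaps

open scoped Classical
open Equiv.Perm (ofSubtype)

variable {S G T : Finset ℕ} {f h : ℕ → ℕ}

noncomputable def sMaps (S G : Finset ℕ) : Finset (ℕ → ℕ) :=
  (G.pi fun _ => S).image fun p i => if hi : i ∈ G then p i hi else 0

theorem mem_sMaps : f ∈ sMaps S G ↔ (∀ i ∈ G, f i ∈ S) ∧ ∀ i ∉ G, f i = 0 := by
  constructor
  · intro hf
    obtain ⟨p, hp, rfl⟩ := mem_image.1 hf
    rw [mem_pi] at hp
    exact ⟨fun i hi => by simpa [dif_pos hi] using hp i hi, fun i hi => by simp [dif_neg hi]⟩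
  · rintro ⟨hS, h0⟩
    refine mem_image.2 ⟨fun i _ => f i, mem_pi.2 hS, funext fun i => ?_⟩
    by_cases hi : i ∈ G
    · simp [dif_pos hi]
    · simp [dif_neg hi, h0 i hi]

theorem card_sMaps : #(sMaps S G) = #S ^ #G := by
  rw [sMaps, card_image_of_injOn, card_pi, prod_const]
  intro p hp q hq hpq
  funext i hi
  simpa [dif_pos hi] using congrFun hpq i

noncomputable def cyclicPts (G : Finset ℕ) (f : ℕ → ℕ) : Finset ℕ :=
  G.filter (· ∈ periodicPts f)

theorem mem_cyclicPts {x : ℕ} : x ∈ cyclicPts G f ↔ x ∈ G ∧ x ∈ periodicPts f :=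
  mem_filter

theorem bijOn_cyclicPts (h0 : 0 ∉ G) (hf : ∀ i ∉ G, f i = 0) :
    Set.BijOn f (cyclicPts G f) (cyclicPts G f) := by
  refine ⟨fun x hx => ?_, fun x hx y hy hxy => ?_, fun y hy => ?_⟩
  · obtain ⟨hxG, hx⟩ := mem_cyclicPts.1 hx
    exact mem_cyclicPts.2 ⟨iterate_mem_of_mem_periodicPts hf h0 hxG hx 1,
      (bijOn_periodicPts (f := f)).mapsTo hx⟩
  · exact (bijOn_periodicPts (f := f)).injOn (mem_cyclicPts.1 hx).2 (mem_cyclicPts.1 hy).2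
      hxy
  · obtain ⟨hyG, hy⟩ := mem_cyclicPts.1 hy
    obtain ⟨x, hx, rfl⟩ := (bijOn_periodicPts (f := f)).surjOn hy
    have hxG : x ∈ G := by
      by_contra hxG
      exact h0 (hf x hxG ▸ hyG)
    exact ⟨x, mem_cyclicPts.2 ⟨hxG, hx⟩, rfl⟩

theorem hasCycle_iff_cyclicPts_nonempty (h0 : 0 ∉ S) (hGS : G ⊆ S) (hf : f ∈ sMaps S G) :
    HasCycle S f ↔ (cyclicPts G f).Nonempty := by
  obtain ⟨hfS, hf0⟩ := mem_sMaps.1 hf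
  rw [hasCycle_iff_exists_mem_periodicPts]
  constructor
  · rintro ⟨x, hx, horb⟩
    have hxG : x ∈ G := by
      by_contra hxG
      exact h0 (hf0 x hxG ▸ horb 1)
    exact ⟨x, mem_cyclicPts.2 ⟨hxG, hx⟩⟩
  · rintro ⟨x, hx⟩
    obtain ⟨hxG, hx⟩ := mem_cyclicPts.1 hx
    exact ⟨x, hx, fun n =>
      hGS (iterate_mem_of_mem_periodicPts hf0 (fun h => h0 (hGS h)) hxG hx n)⟩

theorem piecewise_sdiff_mem_sMaps (hf : f ∈ sMaps S G) :
    (G \ T).piecewise f 0 ∈ sMaps S (G \ T) := by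
  refine mem_sMaps.2 ⟨fun i hi => ?_, fun i hi => piecewise_eq_of_notMem _ _ _ hi⟩
  rw [piecewise_eq_of_mem _ _ _ hi]
  exact (mem_sMaps.1 hf).1 i (mem_sdiff.1 hi).1

theorem cyclicPts_piecewise_sdiff (h0 : 0 ∉ G) :
    cyclicPts (G \ cyclicPts G f) ((G \ cyclicPts G f).piecewise f 0) = ∅ := by
  set T := cyclicPts G f
  set g := (G \ T).piecewise f 0
  refine eq_empty_of_forall_notMem fun x hx => ?_
  obtain ⟨hxGT, hx⟩ := mem_cyclicPts.1 hx
  have horb : ∀ n, g^[n] x ∈ G \ T :=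
    iterate_mem_of_mem_periodicPts (fun y hy => piecewise_eq_of_notMem _ _ _ hy)
      (fun h => h0 (sdiff_subset h)) hxGT hx
  have hfg : Set.EqOn f g ↑(G \ T) := fun y hy => (piecewise_eq_of_mem _ _ _ hy).symm
  exact (mem_sdiff.1 hxGT).2
    (mem_cyclicPts.2 ⟨(mem_sdiff.1 hxGT).1, mem_periodicPts_of_eqOn hfg horb hx⟩)

theorem piecewise_ofSubtype_mem_sMaps (hGS : G ⊆ S) (hT : T ⊆ G) (σ : Equiv.Perm T)
    (hh : h ∈ sMaps S (G \ T)) : T.piecewise (ofSubtype σ) h ∈ sMaps S G := by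
  rw [mem_sMaps] at hh ⊢
  constructor
  · intro i hi
    by_cases hiT : i ∈ T
    · rw [piecewise_eq_of_mem _ _ _ hiT, Equiv.Perm.ofSubtype_apply_of_mem _ hiT]
      exact hGS (hT (σ _).2)
    · rw [piecewise_eq_of_notMem _ _ _ hiT]
      exact hh.1 i (mem_sdiff.2 ⟨hi, hiT⟩)
  · intro i hi
    rw [piecewise_eq_of_notMem _ _ _ (fun hiT => hi (hT hiT))]
    exact hh.2 i (fun hiGT => hi (mem_sdiff.1 hiGT).1)

theorem semiconj_piecewise_ofSubtype (σ : Equiv.Perm T) :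
    Semiconj Subtype.val σ (T.piecewise (ofSubtype σ) h) := fun x => by
  rw [piecewise_eq_of_mem _ _ _ x.2, Equiv.Perm.ofSubtype_apply_coe]

theorem bijOn_piecewise_ofSubtype (σ : Equiv.Perm T) :
    Set.BijOn (T.piecewise (ofSubtype σ) h) T T := by
  have hσ := semiconj_piecewise_ofSubtype (h := h) σ
  refine ⟨fun x hx => ?_, fun x hx y hy hxy => ?_, fun y hy => ?_⟩
  · exact (hσ ⟨x, hx⟩).symm ▸ (σ ⟨x, hx⟩).2
  · rw [← hσ ⟨x, hx⟩, ← hσ ⟨y, hy⟩] at hxy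
    exact congrArg Subtype.val (σ.injective (Subtype.ext hxy))
  · refine ⟨σ.symm ⟨y, hy⟩, (σ.symm ⟨y, hy⟩).2, ?_⟩
    rw [← hσ, Equiv.apply_symm_apply]

theorem cyclicPts_piecewise_ofSubtype (h0 : 0 ∉ G) (hT : T ⊆ G) (σ : Equiv.Perm T)
    (hh : h ∈ sMaps S (G \ T)) (hacyc : cyclicPts (G \ T) h = ∅) :
    cyclicPts G (T.piecewise (ofSubtype σ) h) = T := by
  have hout : ∀ i ∉ G, T.piecewise (ofSubtype σ) h i = 0 := fun i hi => by
    rw [piecewise_eq_of_notMem _ _ _ (fun hiT => hi (hT hiT))]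
    exact (mem_sMaps.1 hh).2 i (fun hiGT => hi (mem_sdiff.1 hiGT).1)
  have hhg : Set.EqOn h (T.piecewise (ofSubtype σ) h) ↑(G \ T) := fun y hy =>
    (piecewise_eq_of_notMem _ _ _ (mem_sdiff.1 hy).2).symm
  ext x
  refine ⟨fun hx => ?_, fun hxT => mem_cyclicPts.2 ⟨hT hxT, ?_⟩⟩
  · obtain ⟨hxG, hx⟩ := mem_cyclicPts.1 hx
    by_contra hxT
    have horb : ∀ n, (T.piecewise (ofSubtype σ) h)^[n] x ∈ G \ T := fun n =>
      mem_sdiff.2 ⟨iterate_mem_of_mem_periodicPts hout h0 hxG hx n,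
        fun hnT => hxT
          (mem_of_iterate_mem_of_mapsTo (bijOn_piecewise_ofSubtype σ).mapsTo hx hnT)⟩
    have hxh : x ∈ cyclicPts (G \ T) h :=
      mem_cyclicPts.2 ⟨horb 0, mem_periodicPts_of_eqOn hhg horb hx⟩
    simp [hacyc] at hxh
  · exact (semiconj_piecewise_ofSubtype σ).mapsTo_periodicPts
      (σ.injective.mem_periodicPts ⟨x, hxT⟩)

theorem piecewise_ofSubtype_equiv_eq (hf : ∀ i ∉ G, f i = 0) (hbij : Set.BijOn f T T) :
    T.piecewise (ofSubtype (hbij.equiv f : Equiv.Perm T)) ((G \ T).piecewise f 0) = f := by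
  funext i
  by_cases hiT : i ∈ T
  · rw [piecewise_eq_of_mem _ _ _ hiT, Equiv.Perm.ofSubtype_apply_of_mem _ hiT]
    rfl
  · rw [piecewise_eq_of_notMem _ _ _ hiT]
    by_cases hiG : i ∈ G
    · exact piecewise_eq_of_mem _ _ _ (mem_sdiff.2 ⟨hiG, hiT⟩)
    · rw [piecewise_eq_of_notMem _ _ _ (fun h => hiG (mem_sdiff.1 h).1), hf i hiG]
      rfl

theorem card_filter_cyclicPts_eq (h0 : 0 ∉ G) (hGS : G ⊆ S) (hT : T ⊆ G) :
    #{f ∈ sMaps S G | cyclicPts G f = T} =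
      (#T)! * #{h ∈ sMaps S (G \ T) | cyclicPts (G \ T) h = ∅} := by
  have hbij : ∀ f ∈ {f ∈ sMaps S G | cyclicPts G f = T}, Set.BijOn f T T := fun f hf =>
    (mem_filter.1 hf).2 ▸ bijOn_cyclicPts h0 (mem_sMaps.1 (mem_filter.1 hf).1).2
  rw [← Fintype.card_coe T, ← Fintype.card_perm, ← card_univ, ← card_product]
  refine card_bij'
    (fun f hf => (((hbij f hf).equiv f : Equiv.Perm T), (G \ T).piecewise f 0))
    (fun p _ => T.piecewise (ofSubtype p.1) p.2) ?_ ?_ ?_ ?_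
  · intro f hf
    obtain ⟨hfS, rfl⟩ := mem_filter.1 hf
    exact mem_product.2 ⟨mem_univ _,
      mem_filter.2 ⟨piecewise_sdiff_mem_sMaps hfS, cyclicPts_piecewise_sdiff h0⟩⟩
  · rintro ⟨σ, h⟩ hp
    obtain ⟨hh, hacyc⟩ := mem_filter.1 (mem_product.1 hp).2
    exact mem_filter.2 ⟨piecewise_ofSubtype_mem_sMaps hGS hT σ hh,
      cyclicPts_piecewise_ofSubtype h0 hT σ hh hacyc⟩
  · intro f hf
    exact piecewise_ofSubtype_equiv_eq (mem_sMaps.1 (mem_filter.1 hf).1).2 (hbij f hf)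
  · rintro ⟨σ, h⟩ hp
    obtain ⟨hh, -⟩ := mem_filter.1 (mem_product.1 hp).2
    dsimp only at hh ⊢
    refine Prod.ext (Equiv.ext fun x => Subtype.ext ?_) (funext fun i => ?_)
    · exact (semiconj_piecewise_ofSubtype σ x).symm
    · dsimp only
      by_cases hi : i ∈ G \ T
      · rw [piecewise_eq_of_mem _ _ _ hi, piecewise_eq_of_notMem _ _ _ (mem_sdiff.1 hi).2]
      · rw [piecewise_eq_of_notMem _ _ _ hi, (mem_sMaps.1 hh).2 i hi]
        rfl

theorem pow_card_eq_sum_powerset (h0 : 0 ∉ G) (hGS : G ⊆ S) :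
    #S ^ #G =
      ∑ T ∈ G.powerset, (#T)! * #{h ∈ sMaps S (G \ T) | cyclicPts (G \ T) h = ∅} := by
  rw [← card_sMaps, card_eq_sum_card_fiberwise (f := cyclicPts G) (t := G.powerset)
    fun f _ => mem_powerset.2 (filter_subset _ _)]
  exact sum_congr rfl fun T hT => card_filter_cyclicPts_eq h0 hGS (mem_powerset.1 hT)

theorem card_filter_cyclicPts_eq_empty (h0 : 0 ∉ S) (hGS : G ⊆ S) :
    #{f ∈ sMaps S G | cyclicPts G f = ∅} = cycleFreeCount #S #G := by
  induction G using Finset.strongInduction with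
  | H G ih =>
  have hsum := pow_card_eq_sum_powerset (fun h => h0 (hGS h)) hGS
  have hD := sum_powerset_factorial_mul_cycleFreeCount (card_le_card hGS)
  rw [← add_sum_erase _ _ (empty_mem_powerset G)] at hsum hD
  simp only [card_empty, Nat.factorial_zero, one_mul, sdiff_empty, Nat.sub_zero] at hsum hD
  have hrest :
      ∑ T ∈ G.powerset.erase ∅, (#T)! * #{h ∈ sMaps S (G \ T) | cyclicPts (G \ T) h = ∅} =
        ∑ T ∈ G.powerset.erase ∅, (#T)! * cycleFreeCount #S (#G - #T) := by
    refine sum_congr rfl fun T hT => ?_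
    obtain ⟨hT0, hTG⟩ := mem_erase.1 hT
    rw [mem_powerset] at hTG
    rw [ih _ (sdiff_ssubset hTG (nonempty_iff_ne_empty.2 hT0)) (sdiff_subset.trans hGS),
      card_sdiff_of_subset hTG]
  omega

theorem card_filter_not_hasCycle (h0 : 0 ∉ S) (hGS : G ⊆ S) :
    #{f ∈ sMaps S G | ¬HasCycle S f} = cycleFreeCount #S #G := by
  rw [← card_filter_cyclicPts_eq_empty h0 hGS]
  congr 1
  refine filter_congr fun f hf => ?_
  rw [hasCycle_iff_cyclicPts_nonempty h0 hGS hf, not_nonempty_iff_eq_empty]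

theorem card_filter_hasCycle (h0 : 0 ∉ S) (hGS : G ⊆ S) :
    #{f ∈ sMaps S G | HasCycle S f} = #G * #S ^ (#G - 1) := by
  have hsplit := card_filter_add_card_filter_not (s := sMaps S G) (fun f => HasCycle S f)
  have hcount := cycleFreeCount_add_mul_pow (card_le_card hGS)
  rw [card_filter_not_hasCycle h0 hGS, card_sMaps] at hsplit
  omega

end SMaps

section Probability

open scoped Classical ENNReal

variable {Ω β : Type*} [MeasurableSpace Ω] {μ : Measure Ω}

theorem measure_preimage_eq_card_filter_mul [IsProbabilityMeasure μ] {X : Ω → β}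
    {M : Finset β} {p : ℝ≥0∞} (hmeas : ∀ m ∈ M, MeasurableSet (X ⁻¹' {m}))
    (hX : ∀ m ∈ M, μ (X ⁻¹' {m}) = p) (hM : #M * p = 1) (P : β → Prop) :
    μ {ω | P (X ω)} = #{m ∈ M | P m} * p := by
  have hsum : ∀ N ⊆ M, μ (X ⁻¹' ↑N) = #N * p := fun N hN => by
    rw [← sum_measure_preimage_singleton N fun m hm => hmeas m (hN hm),
      sum_congr rfl fun m hm => hX m (hN hm), sum_const, nsmul_eq_mul]
  have hMmeas : MeasurableSet (X ⁻¹' ↑M) := by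
    rw [← Finset.set_biUnion_preimage_singleton]
    exact Finset.measurableSet_biUnion M hmeas
  have hnull : μ (X ⁻¹' ↑M)ᶜ = 0 := by
    rw [measure_compl hMmeas (measure_ne_top _ _), hsum M subset_rfl, hM, measure_univ, tsub_self]
  calc μ {ω | P (X ω)} = μ ({ω | P (X ω)} ∩ X ⁻¹' ↑M) :=
        (measure_inter_conull hnull).symm
    _ = μ (X ⁻¹' ↑{m ∈ M | P m}) := by
      congr 1
      ext ω
      simp [and_comm]
    _ = _ := hsum _ (filter_subset _ _)

variable {S G : Finset ℕ} {F : Ω → ℕ → ℕ} {f : ℕ → ℕ}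

omit [MeasurableSpace Ω] in
theorem preimage_singleton_eq_biInter (hF0 : ∀ ω, ∀ i ∉ G, F ω i = 0)
    (hf : ∀ i ∉ G, f i = 0) :
    F ⁻¹' {f} = ⋂ i ∈ (univ : Finset G), (fun ω => F ω i) ⁻¹' {f i} := by
  ext ω
  simp only [Set.mem_preimage, Set.mem_singleton_iff, Set.mem_iInter, mem_univ, forall_const]
  refine ⟨fun h i => h ▸ rfl, fun h => funext fun i => ?_⟩
  by_cases hi : i ∈ G
  · exact h ⟨i, hi⟩
  · rw [hF0 ω i hi, hf i hi]

theorem measure_preimage_singleton_of_mem_sMaps [IsFiniteMeasure μ]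
    (hF0 : ∀ ω, ∀ i ∉ G, F ω i = 0)
    (hindep : ProbabilityTheory.iIndepFun (fun (i : G) ω => F ω i) μ)
    (hunif : ∀ i ∈ G, ∀ j ∈ S, (μ {ω | F ω i = j}).toReal = 1 / #S)
    (hf : f ∈ sMaps S G) :
    μ (F ⁻¹' {f}) = ENNReal.ofReal (1 / #S) ^ #G := by
  rw [preimage_singleton_eq_biInter hF0 (mem_sMaps.1 hf).2,
    hindep.measure_inter_preimage_eq_mul _ fun _ _ => measurableSet_singleton _,
    prod_congr rfl fun i _ => ?_, prod_const, card_univ, Fintype.card_coe]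
  rw [← ENNReal.ofReal_toReal (measure_ne_top μ _)]
  exact congrArg _ (hunif i i.2 _ ((mem_sMaps.1 hf).1 i i.2))

theorem natCast_pow_mul_ofReal_one_div_pow {n k : ℕ} (hk : k ≤ n) :
    ((n ^ k : ℕ) : ℝ≥0∞) * ENNReal.ofReal (1 / n) ^ k = 1 := by
  rcases Nat.eq_zero_or_pos k with rfl | hk0
  · simp
  rw [Nat.cast_pow, ← mul_pow, one_div, ENNReal.ofReal_inv_of_pos (by norm_cast; omega),
    ENNReal.ofReal_natCast, ENNReal.mul_inv_cancel (by norm_cast; omega) (by simp), one_pow]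

theorem mul_pow_sub_one_mul_one_div_pow (n k : ℕ) :
    (k * n ^ (k - 1) : ℝ) * (1 / n) ^ k = k / n := by
  cases k with
  | zero => simp
  | succ k =>
    rcases Nat.eq_zero_or_pos n with rfl | hn
    · simp
    rw [Nat.add_sub_cancel, one_div_pow, pow_succ]
    field_simp

theorem measure_hasCycle [IsProbabilityMeasure μ] (h0 : 0 ∉ S) (hGS : G ⊆ S)
    (hF0 : ∀ ω, ∀ i ∉ G, F ω i = 0) (hmeas : ∀ i ∈ G, Measurable fun ω => F ω i)
    (hindep : ProbabilityTheory.iIndepFun (fun (i : G) ω => F ω i) μ)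
    (hunif : ∀ i ∈ G, ∀ j ∈ S, (μ {ω | F ω i = j}).toReal = 1 / #S) :
    (μ {ω | HasCycle S (F ω)}).toReal = #G / #S := by
  have hmeasF : ∀ f ∈ sMaps S G, MeasurableSet (F ⁻¹' {f}) := fun f hf => by
    rw [preimage_singleton_eq_biInter hF0 (mem_sMaps.1 hf).2]
    exact Finset.measurableSet_biInter _ fun i _ => hmeas i i.2 (measurableSet_singleton _)
  have hM : (#(sMaps S G) : ℝ≥0∞) * ENNReal.ofReal (1 / #S) ^ #G = 1 := by
    rw [card_sMaps]
    exact natCast_pow_mul_ofReal_one_div_pow (card_le_card hGS)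
  rw [measure_preimage_eq_card_filter_mul hmeasF
    (fun f hf => measure_preimage_singleton_of_mem_sMaps hF0 hindep hunif hf) hM,
    card_filter_hasCycle h0 hGS, ENNReal.toReal_mul, ENNReal.toReal_pow,
    ENNReal.toReal_ofReal (by positivity), ENNReal.toReal_natCast]
  push_cast
  exact mul_pow_sub_one_mul_one_div_pow _ _

end Probability

theorem cycleFree_count_goodSet_general
    (S : Finset ℕ) (hpos : ∀ i ∈ S, 0 < i)
    (G : Finset ℕ) (hGS : G ⊆ S)
    (n k : ℕ) (hn : S.card = n) (hk : G.card = k)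
    {Ω : Type*} [MeasurableSpace Ω] (μ : Measure Ω) [IsProbabilityMeasure μ]
    (F : Ω → ℕ → ℕ)
    (hF0 : ∀ ω, ∀ i ∉ G, F ω i = 0)
    (hmeas : ∀ i ∈ G, Measurable fun ω => F ω i)
    (hindep : ProbabilityTheory.iIndepFun
      (fun (i : {i // i ∈ G}) ω => F ω i.val) μ)
    (hunif : ∀ i ∈ G, ∀ j ∈ S, (μ {ω | F ω i = j}).toReal = 1 / n) :
    ((1 ≤ k →
        {f : ℕ → ℕ | (∀ i ∈ G, f i ∈ S) ∧ (∀ i ∉ G, f i = 0) ∧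
          ¬ HasCycle S f}.ncard = (n - k) * n ^ (k - 1)) ∧
      (k = 0 →
        {f : ℕ → ℕ | (∀ i ∈ G, f i ∈ S) ∧ (∀ i ∉ G, f i = 0) ∧
          ¬ HasCycle S f}.ncard = 1))
    ∧ (μ {ω | HasCycle S (F ω)}).toReal = (k : ℝ) / n := by
  classical
  subst hn hk
  have h0 : 0 ∉ S := fun h => (hpos 0 h).false
  have hcount : {f : ℕ → ℕ | (∀ i ∈ G, f i ∈ S) ∧ (∀ i ∉ G, f i = 0) ∧
      ¬ HasCycle S f}.ncard = cycleFreeCount #S #G := by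
    rw [← card_filter_not_hasCycle h0 hGS, ← Set.ncard_coe_finset]
    congr 1
    ext f
    simp [mem_sMaps, and_assoc]
  refine ⟨⟨fun hk => ?_, fun hk => ?_⟩, measure_hasCycle h0 hGS hF0 hmeas hindep hunif⟩
  · rw [hcount, cycleFreeCount, if_neg (by omega)]
  · rw [hcount, cycleFreeCount, if_pos hk]

/-- Let `S` be a finite nonempty set of positive integers with `|S| = n` and let
`G ⊆ S` with `|G| = k`.  The number of cycle-free `S`-maps with `f i ∈ S` for
`i ∈ G` and `f i = 0` otherwise equals `(n - k) * n ^ (k - 1)` when `k ≥ 1`, and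
equals `1` when `k = 0`.  Equivalently, a random `S`-map `F` with `F i = 0` for
`i ∉ G` and `F i` uniform on `S`, independently for `i ∈ G`, has a cycle with
probability `k / n`. -/
theorem cycleFree_count_goodSet
    (S : Finset ℕ) (hS : S.Nonempty) (hpos : ∀ i ∈ S, 0 < i)
    (G : Finset ℕ) (hGS : G ⊆ S)
    (n k : ℕ) (hn : S.card = n) (hk : G.card = k)
    {Ω : Type*} [MeasurableSpace Ω] (μ : Measure Ω) [IsProbabilityMeasure μ]
    (F : Ω → ℕ → ℕ)
    (hF0 : ∀ ω, ∀ i ∉ G, F ω i = 0)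
    (hmeas : ∀ i ∈ G, Measurable fun ω => F ω i)
    (hindep : ProbabilityTheory.iIndepFun
      (fun (i : {i // i ∈ G}) ω => F ω i.val) μ)
    (hunif : ∀ i ∈ G, ∀ j ∈ S, (μ {ω | F ω i = j}).toReal = 1 / n) :
    ((1 ≤ k →
        {f : ℕ → ℕ | (∀ i ∈ G, f i ∈ S) ∧ (∀ i ∉ G, f i = 0) ∧
          ¬ HasCycle S f}.ncard = (n - k) * n ^ (k - 1)) ∧
      (k = 0 →
        {f : ℕ → ℕ | (∀ i ∈ G, f i ∈ S) ∧ (∀ i ∉ G, f i = 0) ∧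
          ¬ HasCycle S f}.ncard = 1))
    ∧ (μ {ω | HasCycle S (F ω)}).toReal = (k : ℝ) / n :=
  cycleFree_count_goodSet_general S hpos G hGS n k hn hk μ F hF0 hmeas hindep hunif
end

section
/- Let S be a finite nonempty set of positive integers with |S| = n, let π be a probability distribution on S, and let G ⊆ S with |G| = k, 0 < k < n. Let f be a random S-map with f(i) = 0 for all i ∈ S \ G and with the values f(i) for i ∈ G chosen independently from S according to π. Then the probability that f has a cycle equals Σ_{i ∈ G} π(i). -/
open MeasureTheory

/-!
Points outside `G` are sent to `0 ∉ S`, so every cycle lies in `G`. For `x ∈ H`, consider the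
event that the map has a cycle inside `H` or that the orbit of `x` reaches a set `E` (disjoint
from `H`) without leaving `H`. Conditioning on the value `j` at `x`, this event becomes the same
event for `H \ {x}`, `E ∪ {x}` and the start `j`; strong induction on `H` then shows that it has
probability `π(H) + π(E)`. The theorem is the case `E = ∅`.
-/

open Function Set ProbabilityTheory

namespace Function

variable {α : Type*} {f g : α → α} {H E : Set α} {x : α}

def HasCycleIn (f : α → α) (H : Set α) : Prop :=
  ∃ x ∈ periodicPts f, ∀ n, f^[n] x ∈ H

def ReachesThrough (f : α → α) (H E : Set α) (x : α) : Prop :=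
  ∃ m, f^[m] x ∈ E ∧ ∀ i < m, f^[i] x ∈ H

theorem iterate_eq_of_eqOn (h : EqOn f g H) {m : ℕ} (hx : ∀ i < m, f^[i] x ∈ H) :
    f^[m] x = g^[m] x := by
  induction m with
  | zero => rfl
  | succ m ih =>
    rw [iterate_succ_apply', iterate_succ_apply', ← ih fun i hi => hx i (by omega),
      h (hx m m.lt_succ_self)]

theorem IsPeriodicPt.forall_iterate_mem {n : ℕ} (hx : IsPeriodicPt f n x) (hn : 0 < n)
    (hH : ∀ i < n, f^[i] x ∈ H) (m : ℕ) : f^[m] x ∈ H :=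
  hx.iterate_mod_apply m ▸ hH _ (Nat.mod_lt m hn)

theorem hasCycleIn_iff_of_eqOn (h : EqOn f g H) : HasCycleIn f H ↔ HasCycleIn g H := by
  suffices ∀ {f g : α → α}, EqOn f g H → HasCycleIn f H → HasCycleIn g H from
    ⟨this h, this h.symm⟩
  rintro f g h ⟨x, hx, hH⟩
  have hfg : ∀ m, f^[m] x = g^[m] x := fun m => iterate_eq_of_eqOn h fun i _ => hH i
  obtain ⟨n, hn, hper⟩ := mem_periodicPts.mp hx
  exact ⟨x, mem_periodicPts.mpr ⟨n, hn, (hfg n).symm.trans hper⟩, fun m => hfg m ▸ hH m⟩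

theorem reachesThrough_iff_of_eqOn (h : EqOn f g H) :
    ReachesThrough f H E x ↔ ReachesThrough g H E x := by
  suffices ∀ {f g : α → α}, EqOn f g H → ReachesThrough f H E x → ReachesThrough g H E x from
    ⟨this h, this h.symm⟩
  rintro f g h ⟨m, hm, hH⟩
  have hfg : ∀ i ≤ m, f^[i] x = g^[i] x := fun i hi =>
    iterate_eq_of_eqOn h fun j hj => hH j (by omega)
  exact ⟨m, hfg m le_rfl ▸ hm, fun i hi => hfg i hi.le ▸ hH i hi⟩

theorem HasCycleIn.mono {H' : Set α} (hf : HasCycleIn f H) (hH : H ⊆ H') : HasCycleIn f H' :=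
  let ⟨x, hx, hxH⟩ := hf
  ⟨x, hx, fun n => hH (hxH n)⟩

theorem ReachesThrough.mono {H' : Set α} (hf : ReachesThrough f H E x) (hH : H ⊆ H') :
    ReachesThrough f H' E x :=
  let ⟨m, hm, hxH⟩ := hf
  ⟨m, hm, fun i hi => hH (hxH i hi)⟩

theorem ReachesThrough.diff (hf : ReachesThrough f H E x) : ReachesThrough f (H \ E) E x := by
  classical
  obtain ⟨m, hm, hH⟩ := hf
  have hex : ∃ m, f^[m] x ∈ E := ⟨m, hm⟩
  exact ⟨Nat.find hex, Nat.find_spec hex, fun i hi =>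
    ⟨hH i (hi.trans_le (Nat.find_min' hex hm)), Nat.find_min hex hi⟩⟩

theorem reachesThrough_of_mem (hx : x ∈ E) : ReachesThrough f H E x :=
  ⟨0, hx, fun _ h => absurd h (Nat.not_lt_zero _)⟩

theorem not_reachesThrough_of_notMem (hxH : x ∉ H) (hxE : x ∉ E) : ¬ ReachesThrough f H E x := by
  rintro ⟨_ | m, hm, hH⟩
  · exact hxE hm
  · exact hxH (hH 0 m.succ_pos)

theorem not_hasCycleIn_empty : ¬ HasCycleIn f ∅ := fun ⟨_, _, h⟩ => h 0

/-- A cycle through `x` is the orbit of `f x` returning to `x`; otherwise the walk from `x`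
continues as the walk from `f x`. -/
theorem hasCycleIn_or_reachesThrough_iff (hx : x ∈ H) (hxE : x ∉ E) :
    HasCycleIn f H ∨ ReachesThrough f H E x ↔
      HasCycleIn f (H \ {x}) ∨ ReachesThrough f (H \ {x}) (insert x E) (f x) := by
  have hsub : H \ insert x E ⊆ H \ {x} := sdiff_subset_sdiff_right (by simp)
  constructor
  · rintro (⟨y, hy, hyH⟩ | ⟨m, hm, hH⟩)
    · by_cases hxy : ∃ i, f^[i] y = x
      · obtain ⟨i, rfl⟩ := hxy
        obtain ⟨n, hn, hper⟩ := mem_periodicPts.mp hy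
        have hxper : IsPeriodicPt f n (f^[i] y) := hper.apply_iterate i
        refine Or.inr (ReachesThrough.mono (ReachesThrough.diff ?_) hsub)
        refine ⟨n - 1, ?_, fun j _ => ?_⟩
        · rw [← iterate_succ_apply, Nat.succ_eq_add_one, Nat.sub_add_cancel hn, hxper.eq]
          exact mem_insert _ _
        · rw [← iterate_succ_apply, ← iterate_add_apply]
          exact hyH _
      · push Not at hxy
        exact Or.inl ⟨y, hy, fun n => ⟨hyH n, hxy n⟩⟩
    · obtain _ | m := m
      · exact absurd hm hxE
      refine Or.inr (ReachesThrough.mono (ReachesThrough.diff ⟨m, ?_, fun i hi => ?_⟩) hsub)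
      · exact mem_insert_of_mem _ (iterate_succ_apply f m x ▸ hm)
      · exact iterate_succ_apply f i x ▸ hH (i + 1) (by omega)
  · have hstep : ∀ m, (∀ i < m, f^[i] (f x) ∈ H \ {x}) → ∀ i < m + 1, f^[i] x ∈ H := by
      rintro m hm (_ | i) hi
      · exact hx
      · exact (iterate_succ_apply f i x ▸ hm i (by omega)).1
    rintro (hc | ⟨m, hm, hH⟩)
    · exact Or.inl (hc.mono sdiff_subset)
    · rcases hm with hm | hm
      · have hper : IsPeriodicPt f (m + 1) x := by
          rw [IsPeriodicPt, IsFixedPt, iterate_succ_apply, hm]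
        exact Or.inl ⟨x, mk_mem_periodicPts m.succ_pos hper,
          hper.forall_iterate_mem m.succ_pos (hstep m hH)⟩
      · exact Or.inr ⟨m + 1, iterate_succ_apply f m x ▸ hm, hstep m hH⟩

end Function

theorem hasCycle_iff_hasCycleIn {S : Finset ℕ} {f : ℕ → ℕ} : HasCycle S f ↔ HasCycleIn f S := by
  constructor
  · rintro ⟨k, a, hk, haS, hstep, hlast⟩
    have hit : ∀ i < k, f^[i] (a 0) = a i := by
      intro i hi
      induction i with
      | zero => rfl
      | succ i ih => rw [iterate_succ_apply', ih (by omega), hstep i hi]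
    have hper : IsPeriodicPt f k (a 0) := by
      rw [IsPeriodicPt, IsFixedPt, ← Nat.sub_add_cancel hk, iterate_succ_apply', hit _ (by omega),
        hlast]
    exact ⟨a 0, mk_mem_periodicPts hk hper,
      hper.forall_iterate_mem hk fun i hi => hit i hi ▸ haS i hi⟩
  · rintro ⟨x, hx, hxS⟩
    obtain ⟨n, hn, hper⟩ := mem_periodicPts.mp hx
    refine ⟨n, fun i => f^[i] x, hn, fun i _ => hxS i,
      fun i _ => (iterate_succ_apply' f i x).symm, ?_⟩
    change f (f^[n - 1] x) = x
    rw [← iterate_succ_apply' f, Nat.succ_eq_add_one, Nat.sub_add_cancel hn]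
    exact hper

theorem hasCycleIn_iff_of_eq_zero {S G : Finset ℕ} {f : ℕ → ℕ} (hS : (0 : ℕ) ∉ S) (hGS : G ⊆ S)
    (hf : ∀ i ∈ S \ G, f i = 0) : HasCycleIn f S ↔ HasCycleIn f G := by
  refine ⟨fun ⟨x, hx, hxS⟩ => ⟨x, hx, fun n => ?_⟩, fun h => h.mono (by simpa using hGS)⟩
  by_contra hG
  have := hf _ (Finset.mem_sdiff.mpr ⟨hxS n, hG⟩)
  exact hS (this ▸ iterate_succ_apply' f n x ▸ hxS (n + 1))

open Classical in
noncomputable def mapsInto (H S : Finset ℕ) : Finset (ℕ → ℕ) :=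
  (H.pi fun _ => S).image fun p a => if h : a ∈ H then p a h else 0

theorem mem_mapsInto {H S : Finset ℕ} {V : ℕ → ℕ} :
    V ∈ mapsInto H S ↔ (∀ a ∈ H, V a ∈ S) ∧ ∀ a ∉ H, V a = 0 := by
  classical
  simp only [mapsInto, Finset.mem_image, Finset.mem_pi]
  constructor
  · rintro ⟨p, hp, rfl⟩
    exact ⟨fun a ha => by simp [ha, hp a ha], fun a ha => by simp [ha]⟩
  · rintro ⟨hS, h0⟩
    refine ⟨fun a _ => V a, hS, funext fun a => ?_⟩
    by_cases ha : a ∈ H <;> simp [ha, h0]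

theorem sum_mapsInto_insert {M : Type*} [AddCommMonoid M] {H S : Finset ℕ} {a : ℕ} (ha : a ∉ H)
    (g : (ℕ → ℕ) → M) :
    ∑ V ∈ mapsInto (insert a H) S, g V = ∑ j ∈ S, ∑ V ∈ mapsInto H S, g (update V a j) := by
  rw [← Finset.sum_product']
  refine Finset.sum_nbij' (fun V => (V a, update V a 0)) (fun p => update p.2 a p.1)
    ?_ ?_ ?_ ?_ ?_
  · simp only [Finset.mem_product, mem_mapsInto, Finset.mem_insert]
    intro V hV
    refine ⟨hV.1 a (Or.inl rfl), fun b hb => ?_, fun b hb => ?_⟩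
    · rw [update_of_ne (by rintro rfl; exact ha hb)]; exact hV.1 b (Or.inr hb)
    · by_cases hab : b = a
      · subst hab; simp
      · rw [update_of_ne hab]; exact hV.2 b (by tauto)
  · simp only [Finset.mem_product, mem_mapsInto, Finset.mem_insert]
    rintro ⟨j, V⟩ ⟨hj, hV⟩
    refine ⟨fun b hb => ?_, fun b hb => ?_⟩
    · rcases hb with rfl | hb
      · simpa using hj
      · rw [update_of_ne (by rintro rfl; exact ha hb)]; exact hV.1 b hb
    · rw [update_of_ne (by tauto)]; exact hV.2 b (by tauto)
  · intro V _
    simp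
  · rintro ⟨j, V⟩ hV
    simp only [Finset.mem_product, mem_mapsInto] at hV
    simp [hV.2.2 a ha]
  · intro V _
    simp

open Classical in
/-- The probability of `P` for a random map whose values on `H` are drawn independently
from `π`. -/
noncomputable def eventWeight (π : ℕ → ℝ) (H S : Finset ℕ) (P : (ℕ → ℕ) → Prop) : ℝ :=
  ∑ V ∈ mapsInto H S with P V, ∏ a ∈ H, π (V a)

section eventWeight

variable {π : ℕ → ℝ} {H S : Finset ℕ} {P Q : (ℕ → ℕ) → Prop}

theorem eventWeight_congr (h : ∀ V ∈ mapsInto H S, P V ↔ Q V) :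
    eventWeight π H S P = eventWeight π H S Q := by
  classical
  exact Finset.sum_congr (Finset.filter_congr h) fun _ _ => rfl

theorem eventWeight_insert {a : ℕ} (ha : a ∉ H) :
    eventWeight π (insert a H) S P =
      ∑ j ∈ S, π j * eventWeight π H S fun V => P (update V a j) := by
  classical
  simp only [eventWeight, Finset.sum_filter, sum_mapsInto_insert ha, Finset.mul_sum]
  refine Finset.sum_congr rfl fun j _ => Finset.sum_congr rfl fun V _ => ?_
  rw [Finset.prod_insert ha, update_self,
    Finset.prod_congr rfl fun b hb => by rw [update_of_ne (by rintro rfl; exact ha hb)]]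
  split_ifs <;> simp

theorem eventWeight_eq_sum_erase {a : ℕ} (ha : a ∈ H) :
    eventWeight π H S P =
      ∑ j ∈ S, π j * eventWeight π (H.erase a) S fun V => P (update V a j) := by
  conv_lhs => rw [← Finset.insert_erase ha]
  exact eventWeight_insert (Finset.notMem_erase a H)

theorem eventWeight_true (hπ : ∑ j ∈ S, π j = 1) : eventWeight π H S (fun _ => True) = 1 := by
  induction H using Finset.induction_on with
  | empty =>
    have : mapsInto ∅ S = {0} := by
      ext V
      simp [mem_mapsInto, funext_iff]
    simp [eventWeight, this]
  | insert a H ha ih => simp [eventWeight_insert ha, ih, hπ]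

theorem eventWeight_hasCycleIn_of_forall
    (h : ∀ E : Finset ℕ, E ⊆ S → Disjoint H E → ∀ x ∈ H,
      eventWeight π H S (fun f => HasCycleIn f H ∨ ReachesThrough f H E x) =
        ∑ i ∈ H, π i + ∑ i ∈ E, π i) :
    eventWeight π H S (fun f => HasCycleIn f H) = ∑ i ∈ H, π i := by
  obtain rfl | ⟨x, hx⟩ := H.eq_empty_or_nonempty
  · simp [eventWeight, not_hasCycleIn_empty]
  · rw [← add_zero (∑ i ∈ H, π i), ← Finset.sum_empty, ← h ∅ (Finset.empty_subset S)
      (Finset.disjoint_empty_right H) x hx]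
    exact eventWeight_congr fun V _ => by simp [ReachesThrough]

theorem eventWeight_hasCycleIn_or_reachesThrough_eq_sum {E : Finset ℕ} {x : ℕ} (hx : x ∈ H)
    (hxE : x ∉ E) :
    eventWeight π H S (fun f => HasCycleIn f H ∨ ReachesThrough f H E x) =
      ∑ j ∈ S, π j * eventWeight π (H.erase x) S (fun f =>
        HasCycleIn f (H.erase x) ∨ ReachesThrough f (H.erase x) (insert x E : Finset ℕ) j) := by
  rw [eventWeight_eq_sum_erase hx]
  refine Finset.sum_congr rfl fun j _ => congrArg _ (eventWeight_congr fun V _ => ?_)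
  have hV : EqOn (update V x j) V ↑(H.erase x) := fun y hy =>
    update_of_ne (by rintro rfl; simp at hy) _ _
  rw [hasCycleIn_or_reachesThrough_iff (Finset.mem_coe.mpr hx) (by simpa using hxE),
    update_self, ← Finset.coe_erase, ← Finset.coe_insert, hasCycleIn_iff_of_eqOn hV,
    reachesThrough_iff_of_eqOn hV]

theorem eventWeight_hasCycleIn_or_reachesThrough (hπ : ∑ j ∈ S, π j = 1) (hHS : H ⊆ S)
    {E : Finset ℕ} (hES : E ⊆ S) (hHE : Disjoint H E) {x : ℕ} (hx : x ∈ H) :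
    eventWeight π H S (fun f => HasCycleIn f H ∨ ReachesThrough f H E x) =
      ∑ i ∈ H, π i + ∑ i ∈ E, π i := by
  induction H using Finset.strongInduction generalizing E x with
  | H H ih =>
  set H' := H.erase x
  set E' := insert x E
  have hxE : x ∉ E := Finset.disjoint_left.mp hHE hx
  have hH'S : H' ⊆ S := (Finset.erase_subset x H).trans hHS
  have hE'S : E' ⊆ S := Finset.insert_subset (hHS hx) hES
  have hH'E' : Disjoint H' E' := by
    simpa [H', E', Finset.disjoint_insert_right] using
      Finset.disjoint_of_subset_left (Finset.erase_subset x H) hHE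
  have ih' := fun {E} => ih H' (Finset.erase_ssubset hx) hH'S (E := E)
  -- The walk stops at `j ∈ E'`, continues from `j ∈ H'`, and leaves `H'` for any other `j`.
  have hinner : ∀ j ∈ S, eventWeight π H' S
      (fun f => HasCycleIn f H' ∨ ReachesThrough f H' E' j) =
      ∑ i ∈ H', π i + (if j ∈ E' then 1 - ∑ i ∈ H', π i else 0) +
        (if j ∈ H' then ∑ i ∈ E', π i else 0) := by
    intro j _
    by_cases hjE : j ∈ E'
    · have hjH : j ∉ H' := Finset.disjoint_right.mp hH'E' hjE
      rw [eventWeight_congr (Q := fun _ => True) fun V _ =>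
        iff_true_intro (Or.inr (reachesThrough_of_mem (by simpa using hjE))), eventWeight_true hπ]
      simp [hjE, hjH]
    by_cases hjH : j ∈ H'
    · simp [ih' hE'S hH'E' hjH, hjE, hjH]
    rw [eventWeight_congr (Q := fun f => HasCycleIn f H') fun V _ =>
        or_iff_left (not_reachesThrough_of_notMem (by simpa using hjH) (by simpa using hjE)),
      eventWeight_hasCycleIn_of_forall fun E hES hHE y hy => ih' hES hHE hy]
    simp [hjE, hjH]
  rw [eventWeight_hasCycleIn_or_reachesThrough_eq_sum hx hxE,
    Finset.sum_congr rfl fun j hj => by rw [hinner j hj]]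
  simp only [mul_add, Finset.sum_add_distrib, mul_ite, mul_zero, Finset.sum_ite_mem,
    Finset.inter_eq_right.mpr hE'S, Finset.inter_eq_right.mpr hH'S, ← Finset.sum_mul, hπ]
  rw [Finset.sum_insert hxE, ← Finset.add_sum_erase H π hx]
  ring

end eventWeight

section measure

variable {Ω : Type*} [MeasurableSpace Ω] {μ : Measure Ω}

theorem measure_eq_sum_of_pairwiseDisjoint {α : Type*} {T : Finset α} {A : α → Set Ω}
    {B : Set Ω} {P : α → Prop} [DecidablePred P] (hA : ∀ t ∈ T, MeasurableSet (A t))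
    (hdisj : (T : Set α).PairwiseDisjoint A) (hcover : μ (⋃ t ∈ T, A t)ᶜ = 0)
    (hB : ∀ t ∈ T, ∀ ω ∈ A t, ω ∈ B ↔ P t) :
    μ B = ∑ t ∈ T with P t, μ (A t) := by
  have hBA : B ∩ ⋃ t ∈ T, A t = ⋃ t ∈ T.filter P, A t := by
    ext ω
    simp only [mem_inter_iff, mem_iUnion, Finset.mem_filter, exists_prop]
    constructor
    · rintro ⟨hω, t, ht, hωt⟩
      exact ⟨t, ⟨ht, (hB t ht ω hωt).mp hω⟩, hωt⟩
    · rintro ⟨t, ⟨ht, hPt⟩, hωt⟩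
      exact ⟨(hB t ht ω hωt).mpr hPt, t, ht, hωt⟩
  rw [← measure_inter_conull hcover, hBA, measure_biUnion_finset
    (hdisj.subset (Finset.coe_subset.mpr (Finset.filter_subset P T)))
    fun t ht => hA t (Finset.mem_of_mem_filter t ht)]

variable {S G : Finset ℕ} {F : Ω → ℕ → ℕ}

theorem measure_forall_mem_eq_prod (hindep : iIndepFun (fun (i : G) ω => F ω i.val) μ)
    (V : ℕ → ℕ) :
    μ {ω | ∀ i ∈ G, F ω i = V i} = ∏ i ∈ G, μ {ω | F ω i = V i} := by
  have h := hindep.measure_inter_preimage_eq_mul Finset.univ (sets := fun i => {V i.val})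
    fun _ _ => measurableSet_singleton _
  rw [← Finset.prod_coe_sort G]
  convert h using 2
  · ext ω
    simp
  · rfl

theorem toReal_measure_eq_eventWeight [IsProbabilityMeasure μ] {π : ℕ → ℝ}
    (hπ : ∑ j ∈ S, π j = 1) (hmeas : ∀ i ∈ G, Measurable fun ω => F ω i)
    (hindep : iIndepFun (fun (i : G) ω => F ω i.val) μ)
    (hval : ∀ i ∈ G, ∀ j ∈ S, (μ {ω | F ω i = j}).toReal = π j)
    {P : (ℕ → ℕ) → Prop} (hP : ∀ f g, EqOn f g G → P f → P g) :
    (μ {ω | P (F ω)}).toReal = eventWeight π G S P := by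
  classical
  set A : (ℕ → ℕ) → Set Ω := fun V => {ω | ∀ i ∈ G, F ω i = V i}
  have hA : ∀ V, MeasurableSet (A V) := fun V => by
    have hAV : A V = ⋂ i ∈ G, (fun ω => F ω i) ⁻¹' {V i} := by
      ext ω
      simp [A]
    exact hAV ▸ Finset.measurableSet_biInter G fun i hi => hmeas i hi (measurableSet_singleton _)
  have hAπ : ∀ V ∈ mapsInto G S, (μ (A V)).toReal = ∏ i ∈ G, π (V i) := fun V hV => by
    rw [measure_forall_mem_eq_prod hindep, ENNReal.toReal_prod]
    exact Finset.prod_congr rfl fun i hi => hval i hi _ ((mem_mapsInto.mp hV).1 i hi)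
  have hdisj : (mapsInto G S : Set (ℕ → ℕ)).PairwiseDisjoint A := by
    intro V hV W hW hVW
    refine disjoint_left.mpr fun ω hωV hωW => hVW (funext fun a => ?_)
    by_cases ha : a ∈ G
    · rw [← hωV a ha, ← hωW a ha]
    · rw [(mem_mapsInto.mp hV).2 a ha, (mem_mapsInto.mp hW).2 a ha]
  have hcover : μ (⋃ V ∈ mapsInto G S, A V)ᶜ = 0 := by
    rw [prob_compl_eq_zero_iff (Finset.measurableSet_biUnion _ fun V _ => hA V),
      measure_biUnion_finset hdisj fun V _ => hA V, ← ENNReal.toReal_eq_one_iff,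
      ENNReal.toReal_sum fun V _ => measure_ne_top μ _, ← eventWeight_true (H := G) hπ]
    simp only [eventWeight, Finset.filter_true]
    exact Finset.sum_congr rfl hAπ
  rw [measure_eq_sum_of_pairwiseDisjoint (P := P) (fun V _ => hA V) hdisj hcover,
    ENNReal.toReal_sum fun V _ => measure_ne_top μ _, eventWeight]
  · exact Finset.sum_congr rfl fun V hV => hAπ V (Finset.mem_of_mem_filter V hV)
  · intro V _ ω hω
    have hFV : EqOn (F ω) V G := fun i hi => hω i hi
    exact ⟨hP _ _ hFV, hP _ _ hFV.symm⟩

end measure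

theorem cycle_prob_fixed_goodSet_general
    (S : Finset ℕ) (hpos : ∀ i ∈ S, 0 < i)
    (π : ℕ → ℝ) (hπ1 : ∑ i ∈ S, π i = 1)
    (G : Finset ℕ) (hGS : G ⊆ S)
    {Ω : Type*} [MeasurableSpace Ω] (μ : Measure Ω) [IsProbabilityMeasure μ]
    (F : Ω → ℕ → ℕ)
    (hF0 : ∀ ω, ∀ i ∈ S \ G, F ω i = 0)
    (hmeas : ∀ i ∈ G, Measurable fun ω => F ω i)
    (hindep : ProbabilityTheory.iIndepFun
      (fun (i : {i // i ∈ G}) ω => F ω i.val) μ)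
    (hval : ∀ i ∈ G, ∀ j ∈ S, (μ {ω | F ω i = j}).toReal = π j) :
    (μ {ω | HasCycle S (F ω)}).toReal = ∑ i ∈ G, π i := by
  have hS0 : 0 ∉ S := fun h => (hpos 0 h).false
  have hcycle : {ω | HasCycle S (F ω)} = {ω | HasCycleIn (F ω) G} := by
    ext ω
    exact hasCycle_iff_hasCycleIn.trans (hasCycleIn_iff_of_eq_zero hS0 hGS (hF0 ω))
  rw [hcycle, toReal_measure_eq_eventWeight hπ1 hmeas hindep hval
    fun f g hfg => (hasCycleIn_iff_of_eqOn hfg).mp]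
  exact eventWeight_hasCycleIn_of_forall fun E hES hGE x hx =>
    eventWeight_hasCycleIn_or_reachesThrough hπ1 hGS hES hGE hx

/-- Let `S` be a finite nonempty set of positive integers with `|S| = n`, let `π` be
a probability distribution on `S`, and let `G ⊆ S` with `|G| = k`, `0 < k < n`.
Let `F` be a random `S`-map with `F i = 0` for `i ∈ S \ G` and with the values `F i`
for `i ∈ G` chosen independently from `S` according to `π`.  Then the probability
that `F` has a cycle equals `∑ i ∈ G, π i`. -/
theorem cycle_prob_fixed_goodSet
    (S : Finset ℕ) (hS : S.Nonempty) (hpos : ∀ i ∈ S, 0 < i)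
    (n : ℕ) (hn : S.card = n)
    (π : ℕ → ℝ) (hπ0 : ∀ i ∈ S, 0 ≤ π i) (hπ1 : ∑ i ∈ S, π i = 1)
    (G : Finset ℕ) (hGS : G ⊆ S) (k : ℕ) (hk : G.card = k)
    (hk0 : 0 < k) (hkn : k < n)
    {Ω : Type*} [MeasurableSpace Ω] (μ : Measure Ω) [IsProbabilityMeasure μ]
    (F : Ω → ℕ → ℕ)
    (hF0 : ∀ ω, ∀ i ∈ S \ G, F ω i = 0)
    (hmeas : ∀ i ∈ G, Measurable fun ω => F ω i)
    (hindep : ProbabilityTheory.iIndepFun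
      (fun (i : {i // i ∈ G}) ω => F ω i.val) μ)
    (hval : ∀ i ∈ G, ∀ j ∈ S, (μ {ω | F ω i = j}).toReal = π j) :
    (μ {ω | HasCycle S (F ω)}).toReal = ∑ i ∈ G, π i :=
  cycle_prob_fixed_goodSet_general S hpos π hπ1 G hGS μ F hF0 hmeas hindep hval
end
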